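/- arXiv:math/0508284 — 6 statements merged into one kernel-verified Lean document; each statement's English description precedes it below -/
import Mathlib

section
/- For all integers j ≥ 1 and real ξ that is not a nonnegative integer, the fractional difference coefficient Δ_j(-ξ) = Γ(j-ξ)/(Γ(-ξ)Γ(j+1)) satisfies |Δ_j(-ξ) - j^{-ξ-1}/Γ(-ξ)| ≤ C j^{-ξ-2} for some constant C depending only on ξ. -/
/-!
Put `a = -ξ` and `r(n) = Γ(n + a) / (Γ(n) n^a)`; since `Γ(n + 1) = n Γ(n)`, the claim says
`r(n) = 1 + O(1/n)`. Euler's limit formula gives `r(n) → 1`, and the functional equation gives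
`log r(n+1) - log r(n) = log (1 + a/n) - a log (1 + 1/n) = O(1/n²)`. Summing the tail of these
increments bounds `|log r(n)|`, hence `|r(n) - 1|`, by `O(1/n)`.
-/

open Filter Topology Asymptotics Real

noncomputable def gammaRatio (a : ℝ) (n : ℕ) : ℝ :=
  Gamma (n + a) / (Gamma n * (n : ℝ) ^ a)

lemma gammaRatio_pos {a : ℝ} {n : ℕ} (hn : n ≠ 0) (hna : 0 < n + a) : 0 < gammaRatio a n := by
  have hn0 : (0 : ℝ) < n := by positivity
  exact div_pos (Gamma_pos_of_pos hna) (mul_pos (Gamma_pos_of_pos hn0) (rpow_pos_of_pos hn0 a))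

lemma prod_range_add_eq_Gamma_div {a : ℝ} (ha : ∀ m : ℕ, a ≠ -m) (n : ℕ) :
    ∏ j ∈ Finset.range n, (a + j) = Gamma (a + n) / Gamma a := by
  have hΓ : Gamma a ≠ 0 := Gamma_ne_zero ha
  induction n with
  | zero => simp [hΓ]
  | succ n ih =>
    have hn : a + n ≠ 0 := fun h => ha n (by linarith)
    rw [Finset.prod_range_succ, ih, Nat.cast_succ, ← add_assoc, Gamma_add_one hn]
    ring

lemma gammaRatio_eq_GammaSeq {a : ℝ} (ha : ∀ m : ℕ, a ≠ -m) {n : ℕ} (hn : n ≠ 0) :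
    gammaRatio a n = n / (n + a) * (GammaSeq a n / Gamma a)⁻¹ := by
  have hn0 : (0 : ℝ) < n := by positivity
  have hna : (n : ℝ) + a ≠ 0 := fun h => ha n (by linarith)
  have hΓ : Gamma ((n : ℝ) + a) ≠ 0 := Gamma_ne_zero fun m h => ha (n + m) (by push_cast; linarith)
  have := Gamma_ne_zero ha
  have := (rpow_pos_of_pos hn0 a).ne'
  have := (Gamma_pos_of_pos hn0).ne'
  rw [gammaRatio, GammaSeq, prod_range_add_eq_Gamma_div ha, Nat.cast_succ, ← add_assoc,
    add_comm a, Gamma_add_one hna, ← Gamma_nat_eq_factorial, Gamma_add_one hn0.ne']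
  field_simp

lemma tendsto_gammaRatio {a : ℝ} (ha : ∀ m : ℕ, a ≠ -m) :
    Tendsto (gammaRatio a) atTop (𝓝 1) := by
  have hseq : Tendsto (fun n : ℕ => GammaSeq a n / Gamma a) atTop (𝓝 1) := by
    simpa [div_self (Gamma_ne_zero ha)] using (GammaSeq_tendsto_Gamma a).div_const (Gamma a)
  have := (tendsto_natCast_div_add_atTop a).mul (hseq.inv₀ one_ne_zero)
  rw [inv_one, mul_one] at this
  refine this.congr' ?_
  filter_upwards [eventually_ne_atTop 0] with n hn
  exact (gammaRatio_eq_GammaSeq ha hn).symm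

lemma abs_log_one_add_sub_self_le {y : ℝ} (hy : |y| ≤ 1 / 2) : |log (1 + y) - y| ≤ 2 * y ^ 2 := by
  have h := abs_log_sub_add_sum_range_le (x := -y) (by rw [abs_neg]; linarith) 1
  norm_num [abs_neg, neg_add_eq_sub] at h
  refine h.trans ?_
  rw [div_le_iff₀ (by linarith)]
  nlinarith [sq_nonneg y]

lemma log_gammaRatio {a : ℝ} {n : ℕ} (hn : n ≠ 0) (hna : 0 < n + a) :
    log (gammaRatio a n) = log (Gamma (n + a)) - log (Gamma n) - a * log n := by
  have hn0 : (0 : ℝ) < n := by positivity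
  rw [gammaRatio, log_div (Gamma_pos_of_pos hna).ne', log_mul (Gamma_pos_of_pos hn0).ne'
    (rpow_pos_of_pos hn0 a).ne', log_rpow hn0]
  · ring
  · exact (mul_pos (Gamma_pos_of_pos hn0) (rpow_pos_of_pos hn0 a)).ne'

lemma log_gammaRatio_succ_sub {a : ℝ} {n : ℕ} (hn : n ≠ 0) (hna : 0 < n + a) :
    log (gammaRatio a (n + 1)) - log (gammaRatio a n) = log (1 + a / n) - a * log (1 + 1 / n) := by
  have hn0 : (0 : ℝ) < n := by positivity
  have h1 : (0 : ℝ) < (n + 1 : ℕ) + a := by push_cast; linarith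
  rw [log_gammaRatio hn hna, log_gammaRatio n.succ_ne_zero h1, Nat.cast_succ,
    add_right_comm, Gamma_add_one hna.ne', Gamma_add_one hn0.ne',
    log_mul hna.ne' (Gamma_pos_of_pos hna).ne', log_mul hn0.ne' (Gamma_pos_of_pos hn0).ne',
    one_add_div hn0.ne', one_add_div hn0.ne', log_div hna.ne' hn0.ne',
    log_div (by positivity) hn0.ne']
  ring

lemma abs_log_gammaRatio_succ_sub_le {a : ℝ} {n : ℕ} (hn : 2 ≤ n) (ha : 2 * |a| ≤ n) :
    |log (gammaRatio a (n + 1)) - log (gammaRatio a n)|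
      ≤ 4 * (a ^ 2 + |a|) * (1 / n - 1 / (n + 1)) := by
  have hn2 : (2 : ℝ) ≤ n := by exact_mod_cast hn
  have hn0 : (0 : ℝ) < n := by linarith
  have hna : 0 < n + a := by linarith [neg_abs_le a]
  have hu : |a / n| ≤ 1 / 2 := by
    rw [abs_div, Nat.abs_cast, div_le_iff₀ hn0]; linarith
  have hv : |1 / (n : ℝ)| ≤ 1 / 2 := by
    rw [abs_div, Nat.abs_cast, abs_one, div_le_iff₀ hn0]; linarith
  have hsq : 1 / (n : ℝ) ^ 2 ≤ 2 * (1 / n - 1 / (n + 1)) := by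
    rw [div_sub_div _ _ hn0.ne' (by positivity), div_le_iff₀ (by positivity)]
    field_simp
    nlinarith
  rw [log_gammaRatio_succ_sub (by omega) hna]
  calc |log (1 + a / n) - a * log (1 + 1 / n)|
      = |(log (1 + a / n) - a / n) - a * (log (1 + 1 / n) - 1 / n)| := by ring_nf
    _ ≤ |log (1 + a / n) - a / n| + |a| * |log (1 + 1 / n) - 1 / n| := by
        rw [← abs_mul]; exact abs_sub _ _
    _ ≤ 2 * (a / n) ^ 2 + |a| * (2 * (1 / n) ^ 2) := by
        gcongr
        · exact abs_log_one_add_sub_self_le hu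
        · exact abs_log_one_add_sub_self_le hv
    _ = 2 * (a ^ 2 + |a|) * (1 / n ^ 2) := by ring
    _ ≤ 4 * (a ^ 2 + |a|) * (1 / n - 1 / (n + 1)) := by
        have : 0 ≤ a ^ 2 + |a| := by positivity
        nlinarith

lemma abs_sub_le_of_abs_succ_sub_le {f : ℕ → ℝ} {L B : ℝ} {j : ℕ}
    (hf : ∀ k, j ≤ k → |f (k + 1) - f k| ≤ B * (1 / k - 1 / (k + 1)))
    (hL : Tendsto f atTop (𝓝 L)) : |f j - L| ≤ B / j := by
  have hstep (k : ℕ) : |f (k + j + 1) - f (k + j)| ≤ B / (k + j : ℕ) - B / (k + j + 1 : ℕ) := by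
    have := hf (k + j) (Nat.le_add_left j k)
    rwa [mul_sub, mul_one_div, mul_one_div, ← Nat.cast_succ] at this
  have hlim (s : ℝ) : Tendsto (fun k => f (k + j) + s * (B / (k + j : ℕ))) atTop (𝓝 L) := by
    have hB : Tendsto (fun k : ℕ => B / (k + j : ℕ)) atTop (𝓝 0) :=
      (tendsto_const_div_atTop_nhds_zero_nat B).comp (tendsto_add_atTop_nat j)
    simpa using (hL.comp (tendsto_add_atTop_nat j)).add (hB.const_mul s)
  -- `f k + B / k` decreases and `f k - B / k` increases from `k = j` on; both tend to `L`.
  have hupper : L ≤ f j + B / j := by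
    have hanti : Antitone fun k => f (k + j) + 1 * (B / (k + j : ℕ)) :=
      antitone_nat_of_succ_le fun k => by
        have := (le_abs_self _).trans (hstep k)
        rw [add_right_comm k 1 j]; linarith
    simpa using hanti.le_of_tendsto (hlim 1) 0
  have hlower : f j - B / j ≤ L := by
    have hmono : Monotone fun k => f (k + j) + (-1) * (B / (k + j : ℕ)) :=
      monotone_nat_of_le_succ fun k => by
        have := (neg_abs_le _).trans' (neg_le_neg (hstep k))
        rw [add_right_comm k 1 j]; linarith
    simpa [sub_eq_add_neg] using hmono.ge_of_tendsto (hlim (-1)) 0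
  rw [abs_sub_le_iff]
  constructor <;> linarith

lemma abs_log_gammaRatio_le {a : ℝ} (ha : ∀ m : ℕ, a ≠ -m) {n : ℕ} (hn : 2 ≤ n)
    (han : 2 * |a| ≤ n) : |log (gammaRatio a n)| ≤ 4 * (a ^ 2 + |a|) / n := by
  have hlim : Tendsto (fun n => log (gammaRatio a n)) atTop (𝓝 0) := by
    rw [← log_one]
    exact (continuousAt_log one_ne_zero).tendsto.comp (tendsto_gammaRatio ha)
  simpa using abs_sub_le_of_abs_succ_sub_le (fun k hk => abs_log_gammaRatio_succ_sub_le
    (hn.trans hk) (han.trans (by exact_mod_cast hk))) hlim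

lemma gammaRatio_sub_one_isBigO {a : ℝ} (ha : ∀ m : ℕ, a ≠ -m) :
    (fun n => gammaRatio a n - 1) =O[atTop] fun n => (n : ℝ)⁻¹ := by
  set B := 4 * (a ^ 2 + |a|)
  refine IsBigO.of_bound (2 * B) ?_
  filter_upwards [eventually_ge_atTop 2, eventually_ge_atTop ⌈2 * |a|⌉₊,
    eventually_ge_atTop ⌈B⌉₊] with n hn han hBn
  have han' : 2 * |a| ≤ n := Nat.ceil_le.mp han
  have hn0 : (0 : ℝ) < n := by positivity
  have hlog := abs_log_gammaRatio_le ha hn han'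
  have hpos : 0 < gammaRatio a n := gammaRatio_pos (by omega) (by linarith [neg_abs_le a])
  have hle1 : |log (gammaRatio a n)| ≤ 1 :=
    hlog.trans ((div_le_one hn0).mpr (Nat.ceil_le.mp hBn))
  calc ‖gammaRatio a n - 1‖ = |exp (log (gammaRatio a n)) - 1| := by
        rw [exp_log hpos, norm_eq_abs]
    _ ≤ 2 * |log (gammaRatio a n)| := abs_exp_sub_one_le hle1
    _ ≤ 2 * (B / n) := by gcongr
    _ = 2 * B * ‖(n : ℝ)⁻¹‖ := by rw [norm_inv, Real.norm_natCast]; ring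

lemma Gamma_nat_add_div_sub_rpow_isBigO {a : ℝ} (ha : ∀ m : ℕ, a ≠ -m) :
    (fun n : ℕ => Gamma (n + a) / (Gamma a * Gamma (n + 1)) - (n : ℝ) ^ (a - 1) / Gamma a)
      =O[atTop] fun n => (n : ℝ) ^ (a - 2) := by
  have hΓ := Gamma_ne_zero ha
  refine (((isBigO_refl (fun n : ℕ => (n : ℝ) ^ (a - 1)) atTop).mul
    ((gammaRatio_sub_one_isBigO ha).const_mul_left (Gamma a)⁻¹))).congr' ?_ ?_
  all_goals
    filter_upwards [eventually_ne_atTop 0] with n hn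
    have hn0 : (0 : ℝ) < n := by positivity
  · have := (Gamma_pos_of_pos hn0).ne'
    have := (rpow_pos_of_pos hn0 a).ne'
    rw [gammaRatio, rpow_sub_one hn0.ne', Gamma_add_one hn0.ne']
    field_simp
  · rw [show a - 2 = a - 1 - 1 by ring, rpow_sub_one hn0.ne' (a - 1), div_eq_mul_inv]

theorem stmt0 (ξ : ℝ) (hξ : ∀ n : ℕ, ξ ≠ n) :
    ∃ C : ℝ, 0 < C ∧ ∀ j : ℕ, 1 ≤ j →
      |Real.Gamma ((j : ℝ) - ξ) / (Real.Gamma (-ξ) * Real.Gamma ((j : ℝ) + 1))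
          - (j : ℝ) ^ (-ξ - 1) / Real.Gamma (-ξ)|
        ≤ C * (j : ℝ) ^ (-ξ - 2) := by
  obtain ⟨C, hC, hbound⟩ := bound_of_isBigO_nat_atTop
    (Gamma_nat_add_div_sub_rpow_isBigO fun m h => hξ m (neg_injective h))
  refine ⟨C, hC, fun j hj => ?_⟩
  have hpow : 0 < (j : ℝ) ^ (-ξ - 2) := rpow_pos_of_pos (by exact_mod_cast hj) _
  have h := hbound hpow.ne'
  rw [Real.norm_eq_abs, Real.norm_of_nonneg hpow.le] at h
  simpa [sub_eq_add_neg] using h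
end

section
/- Let w_t = (log t)^r t^γ for t ≥ 1 (and 0 for t ≤ 0), with r ≥ 0 and ξ > -1/2. Then for every δ > 0, Σ_{j=0}^{t-1} Δ_j(-ξ)(log(t-j))^r (t-j)^γ = O(t^{max(γ,-1) - ξ + δ}) as t → ∞. -/
/-- Coefficient of `s^j` in the power series expansion of `(1-s)^(-d)`. -/
noncomputable def deltaCoef (d : ℝ) : ℕ → ℝ
  | 0 => 1
  | j + 1 => deltaCoef d j * ((j : ℝ) + d) / ((j : ℝ) + 1)

/-!
Write `w k = (log k) ^ r * k ^ γ` and split the sum at `j = t / 2`.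

For `j ≥ t / 2` the coefficient `Δ_j(-ξ) = O(j ^ (-ξ - 1))` is `O(t ^ (-ξ - 1))`, while
`∑_{k ≤ t/2} |w k| = O(t ^ (max (γ + 1) 0 + ε))`.

For `j < t / 2`, summation by parts (the partial sums of the coefficients of `(1 - s) ^ ξ` are
those of `(1 - s) ^ (ξ - 1)`) trades one unit of `ξ` for one forward difference of `w`; by the
mean value theorem applied to `x ↦ (log x) ^ r * x ^ γ`, the `i`-th difference of `w` is
`O(k ^ (γ - i + ε))`. Each boundary term `Δ_n(1 - ξ) w (t - n)` is `O(t ^ (γ + ε) n ^ (-ξ))`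
because `t - n ≥ t / 2`, and once `ξ ≤ 0` the crude bound `∑_{j<n} |Δ_j(-ξ)| = O(n ^ (-ξ + ε))`
suffices.
-/

open Real Finset Filter Asymptotics
open scoped fwdDiff

lemma rpow_le_two_rpow_abs_mul {a b : ℝ} (p : ℝ) (hb : 0 < b) (hab : a ≤ 2 * b)
    (hba : b ≤ 2 * a) : a ^ p ≤ 2 ^ |p| * b ^ p := by
  have ha : 0 < a := by linarith
  rcases le_total 0 p with hp | hp
  · calc a ^ p ≤ (2 * b) ^ p := rpow_le_rpow ha.le hab hp
      _ = 2 ^ |p| * b ^ p := by rw [mul_rpow zero_le_two hb.le, abs_of_nonneg hp]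
  · calc a ^ p ≤ (b / 2) ^ p := rpow_le_rpow_of_nonpos (by positivity) (by linarith) hp
      _ = 2 ^ |p| * b ^ p := by
        rw [div_rpow hb.le zero_le_two, abs_of_nonpos hp, rpow_neg zero_le_two]; ring

lemma exists_abs_le_mul_rpow_of_isBigO {v : ℕ → ℝ} {β : ℝ}
    (h : v =O[atTop] fun k : ℕ => (k : ℝ) ^ β) :
    ∃ C > 0, ∀ k, 1 ≤ k → |v k| ≤ C * (k : ℝ) ^ β := by
  obtain ⟨C, hC, hbound⟩ := bound_of_isBigO_nat_atTop h
  refine ⟨C, hC, fun k hk => ?_⟩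
  have hk : (0 : ℝ) < k := by exact_mod_cast hk
  simpa [abs_of_pos (rpow_pos_of_pos hk β)] using hbound (rpow_pos_of_pos hk β).ne'

lemma isBigO_natCast_rpow_rpow {a b : ℝ} (h : a ≤ b) :
    (fun t : ℕ => (t : ℝ) ^ a) =O[atTop] fun t : ℕ => (t : ℝ) ^ b := by
  refine IsBigO.of_bound 1 ?_
  filter_upwards [eventually_ge_atTop 1] with t ht
  have ht : (1 : ℝ) ≤ t := by exact_mod_cast ht
  rw [norm_of_nonneg (by positivity), norm_of_nonneg (by positivity), one_mul]
  exact rpow_le_rpow_of_exponent_le ht h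

lemma exists_sum_range_rpow_le (a : ℝ) {ε : ℝ} (hε : 0 < ε) :
    ∃ C ≥ 0, ∀ n : ℕ, ∑ j ∈ range n, ((j : ℝ) + 1) ^ a ≤ C * (n : ℝ) ^ (max (a + 1) 0 + ε) := by
  have hsum : Summable fun j : ℕ => ((j : ℝ) + 1) ^ (-1 - ε) := by
    have := (summable_nat_add_iff 1).2 (summable_nat_rpow.2 (by linarith : -1 - ε < -1))
    simpa using this
  refine ⟨∑' j : ℕ, ((j : ℝ) + 1) ^ (-1 - ε), tsum_nonneg fun j => by positivity, fun n => ?_⟩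
  have hterm : ∀ j ∈ range n, ((j : ℝ) + 1) ^ a
      ≤ (n : ℝ) ^ (max (a + 1) 0 + ε) * ((j : ℝ) + 1) ^ (-1 - ε) := by
    intro j hj
    have hj1 : (1 : ℝ) ≤ j + 1 := by linarith [(j.cast_nonneg : (0 : ℝ) ≤ j)]
    have hjn : (j : ℝ) + 1 ≤ n := by exact_mod_cast mem_range.1 hj
    calc ((j : ℝ) + 1) ^ a = ((j : ℝ) + 1) ^ (a + 1 + ε) * ((j : ℝ) + 1) ^ (-1 - ε) := by
          rw [← rpow_add (by positivity)]; ring_nf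
      _ ≤ (n : ℝ) ^ (max (a + 1) 0 + ε) * ((j : ℝ) + 1) ^ (-1 - ε) := by
          gcongr
          calc ((j : ℝ) + 1) ^ (a + 1 + ε) ≤ ((j : ℝ) + 1) ^ (max (a + 1) 0 + ε) :=
                rpow_le_rpow_of_exponent_le hj1 (by linarith [le_max_left (a + 1) 0])
            _ ≤ (n : ℝ) ^ (max (a + 1) 0 + ε) :=
                rpow_le_rpow (by positivity) hjn (by positivity)
  calc ∑ j ∈ range n, ((j : ℝ) + 1) ^ a
      ≤ ∑ j ∈ range n, (n : ℝ) ^ (max (a + 1) 0 + ε) * ((j : ℝ) + 1) ^ (-1 - ε) := sum_le_sum hterm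
    _ ≤ (n : ℝ) ^ (max (a + 1) 0 + ε) * ∑' j : ℕ, ((j : ℝ) + 1) ^ (-1 - ε) := by
        rw [← mul_sum]
        gcongr
        exact hsum.sum_le_tsum _ fun j _ => by positivity
    _ = _ := mul_comm _ _

lemma exp_mul_harmonic_le (p : ℝ) (n : ℕ) :
    exp (p * harmonic n) ≤ exp |p| * ((n : ℝ) + 1) ^ p := by
  rw [rpow_def_of_pos (by positivity), ← exp_add, exp_le_exp]
  rcases le_total 0 p with hp | hp
  · have hlog : log n ≤ log ((n : ℝ) + 1) := by
      rcases n.eq_zero_or_pos with rfl | hn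
      · simp
      · exact log_le_log (by exact_mod_cast hn) (by linarith)
    have := harmonic_le_one_add_log n
    rw [abs_of_nonneg hp]
    nlinarith
  · have := log_add_one_le_harmonic n
    push_cast at this
    nlinarith [abs_nonneg p]

lemma deltaCoef_succ (d : ℝ) (j : ℕ) :
    deltaCoef d (j + 1) = deltaCoef d j * ((j : ℝ) + d) / ((j : ℝ) + 1) := rfl

lemma isBigO_deltaCoef (d : ℝ) :
    (fun j => deltaCoef d j) =O[atTop] fun j : ℕ => ((j : ℝ) + 1) ^ (d - 1) := by
  obtain ⟨N, hN⟩ := exists_nat_ge (-d)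
  have hmono : ∀ j, N ≤ j →
      |deltaCoef d j| ≤ |deltaCoef d N| * exp ((d - 1) * (harmonic j - harmonic N)) := by
    intro j hj
    induction j, hj using Nat.le_induction with
    | base => simp
    | succ j hj ih =>
      have hjd : 0 ≤ (j : ℝ) + d := by linarith [(Nat.cast_le (α := ℝ)).2 hj]
      have hratio : ((j : ℝ) + d) / ((j : ℝ) + 1) ≤ exp ((d - 1) / ((j : ℝ) + 1)) := by
        convert add_one_le_exp ((d - 1) / ((j : ℝ) + 1)) using 1
        field_simp; ring
      calc |deltaCoef d (j + 1)| = |deltaCoef d j| * (((j : ℝ) + d) / ((j : ℝ) + 1)) := by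
            rw [deltaCoef_succ, mul_div_assoc, abs_mul,
              abs_of_nonneg (div_nonneg hjd (by positivity))]
        _ ≤ |deltaCoef d N| * exp ((d - 1) * (harmonic j - harmonic N))
              * exp ((d - 1) / ((j : ℝ) + 1)) := by gcongr
        _ = |deltaCoef d N| * exp ((d - 1) * (harmonic (j + 1) - harmonic N)) := by
            rw [mul_assoc, ← exp_add, harmonic_succ]
            push_cast
            ring_nf
  refine IsBigO.of_bound (|deltaCoef d N| * exp (-((d - 1) * harmonic N)) * exp |d - 1|) ?_
  filter_upwards [eventually_ge_atTop N] with j hj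
  have hpos : (0 : ℝ) < ((j : ℝ) + 1) ^ (d - 1) := by positivity
  rw [Real.norm_eq_abs, Real.norm_eq_abs, abs_of_pos hpos]
  calc |deltaCoef d j|
      ≤ |deltaCoef d N| * exp (-((d - 1) * harmonic N)) * exp ((d - 1) * harmonic j) := by
        rw [mul_assoc, ← exp_add]
        convert hmono j hj using 3
        ring
    _ ≤ _ := (mul_le_mul_of_nonneg_left (exp_mul_harmonic_le _ _) (by positivity)).trans_eq
        (by ring)

lemma exists_abs_deltaCoef_le (d : ℝ) :
    ∃ C > 0, ∀ j, |deltaCoef d j| ≤ C * ((j : ℝ) + 1) ^ (d - 1) := by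
  obtain ⟨C, hC, hbound⟩ := bound_of_isBigO_nat_atTop (isBigO_deltaCoef d)
  refine ⟨C, hC, fun j => ?_⟩
  have hpos : 0 < ((j : ℝ) + 1) ^ (d - 1) := by positivity
  simpa [abs_of_pos hpos] using hbound hpos.ne'

lemma succ_mul_deltaCoef_succ (d : ℝ) (j : ℕ) :
    ((j : ℝ) + 1) * deltaCoef d (j + 1) = d * deltaCoef (d + 1) j := by
  induction j with
  | zero => simp [deltaCoef]
  | succ j ih =>
    rw [deltaCoef_succ d (j + 1), deltaCoef_succ (d + 1) j]
    push_cast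
    field_simp
    linear_combination ((j : ℝ) + 1 + d) * ih

lemma deltaCoef_succ_eq_sub (d : ℝ) (j : ℕ) :
    deltaCoef d (j + 1) = deltaCoef (d + 1) (j + 1) - deltaCoef (d + 1) j := by
  have h := succ_mul_deltaCoef_succ d j
  rw [deltaCoef_succ (d + 1) j]
  field_simp at h ⊢
  linear_combination h

/-- Summation by parts: the partial sums of `deltaCoef d` are `deltaCoef (d + 1)`. -/
lemma sum_deltaCoef_mul_eq_sum_fwdDiff (d : ℝ) (v : ℕ → ℝ) {n t : ℕ} (hn : n ≤ t) :
    ∑ j ∈ range (n + 1), deltaCoef d j * v (t + 1 - j) =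
      ∑ j ∈ range n, deltaCoef (d + 1) j * Δ_[1] v (t - j)
        + deltaCoef (d + 1) n * v (t + 1 - n) := by
  induction n with
  | zero => simp [deltaCoef]
  | succ n ih =>
    rw [sum_range_succ, ih (by omega), sum_range_succ, deltaCoef_succ_eq_sub, fwdDiff,
      show t - n + 1 = t + 1 - n by omega, show t + 1 - (n + 1) = t - n by omega]
    ring

/-- `DerivIsBigORpow i f β`: near `+∞`, `f` is `i` times differentiable and
`f⁽ⁱ⁾ = O(x ^ (β - i))`. -/
def DerivIsBigORpow : ℕ → (ℝ → ℝ) → ℝ → Prop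
  | 0, f, β => f =O[atTop] fun x => x ^ β
  | i + 1, f, β => ∃ f', (∀ᶠ x in atTop, HasDerivAt f (f' x) x) ∧ DerivIsBigORpow i f' (β - 1)

namespace DerivIsBigORpow

lemma add : ∀ {i : ℕ} {f g : ℝ → ℝ} {β : ℝ},
    DerivIsBigORpow i f β → DerivIsBigORpow i g β → DerivIsBigORpow i (f + g) β
  | 0, _, _, _, hf, hg => IsBigO.add hf hg
  | _ + 1, _, _, _, ⟨f', hf, hf'⟩, ⟨g', hg, hg'⟩ =>
    ⟨f' + g', (hf.and hg).mono fun _ h => h.1.add h.2, add hf' hg'⟩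

lemma const_mul (c : ℝ) : ∀ {i : ℕ} {f : ℝ → ℝ} {β : ℝ},
    DerivIsBigORpow i f β → DerivIsBigORpow i (fun x => c * f x) β
  | 0, _, _, hf => IsBigO.const_mul_left hf c
  | _ + 1, _, _, ⟨f', hf, hf'⟩ =>
    ⟨fun x => c * f' x, hf.mono fun _ h => h.const_mul c, const_mul c hf'⟩

end DerivIsBigORpow

lemma isBigO_fwdDiff_of_hasDerivAt {f f' : ℝ → ℝ} {β : ℝ}
    (hf : ∀ᶠ x in atTop, HasDerivAt f (f' x) x) (hf' : f' =O[atTop] fun x => x ^ β) :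
    Δ_[1] f =O[atTop] fun x => x ^ β := by
  obtain ⟨C, hC, hC'⟩ := hf'.exists_pos
  obtain ⟨X, hX⟩ := eventually_atTop.1 (hf.and hC'.bound)
  refine IsBigO.of_bound (C * 2 ^ |β|) ?_
  filter_upwards [eventually_ge_atTop (max X 1)] with x hx
  have hx1 : 1 ≤ x := le_of_max_le_right hx
  have hder : ∀ y ∈ Set.Icc x (x + 1), HasDerivAt f (f' y) y :=
    fun y hy => (hX y (by linarith [le_of_max_le_left hx, hy.1])).1
  obtain ⟨c, ⟨hxc, hcx⟩, hc⟩ := exists_hasDerivAt_eq_slope f f' (lt_add_one x)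
    (fun y hy => (hder y hy).continuousAt.continuousWithinAt)
    (fun y hy => hder y (Set.Ioo_subset_Icc_self hy))
  have hslope : Δ_[1] f x = f' c := by rw [hc, fwdDiff]; ring
  have hc0 : 0 < c := by linarith
  rw [hslope, norm_of_nonneg (by positivity : (0 : ℝ) ≤ x ^ β)]
  calc ‖f' c‖ ≤ C * ‖c ^ β‖ := (hX c (by linarith [le_of_max_le_left hx])).2
    _ = C * c ^ β := by rw [norm_of_nonneg (by positivity)]
    _ ≤ C * (2 ^ |β| * x ^ β) := by
        gcongr
        exact rpow_le_two_rpow_abs_mul β (by linarith) (by linarith) (by linarith)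
    _ = C * 2 ^ |β| * x ^ β := by ring

namespace DerivIsBigORpow

lemma fwdDiff : ∀ {i : ℕ} {f : ℝ → ℝ} {β : ℝ},
    DerivIsBigORpow (i + 1) f β → DerivIsBigORpow i (Δ_[1] f) (β - 1)
  | 0, _, _, ⟨_, hf, hf'⟩ => isBigO_fwdDiff_of_hasDerivAt hf hf'
  | _ + 1, _, _, ⟨f', hf, hf'⟩ =>
    ⟨Δ_[1] f', ((tendsto_atTop_add_const_right _ 1 tendsto_id).eventually hf).and hf |>.mono
      fun x h => (h.1.comp_add_const x 1).sub h.2, fwdDiff hf'⟩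

lemma isBigO_iterate_fwdDiff : ∀ {i : ℕ} {f : ℝ → ℝ} {β : ℝ},
    DerivIsBigORpow i f β → Δ_[1] ^[i] f =O[atTop] fun x => x ^ (β - i)
  | 0, _, _, hf => by rw [Function.iterate_zero, Nat.cast_zero, sub_zero]; exact hf
  | i + 1, _, β, hf => by
    rw [Function.iterate_succ_apply]
    convert isBigO_iterate_fwdDiff hf.fwdDiff using 3
    push_cast
    ring

end DerivIsBigORpow

lemma derivIsBigORpow_log_rpow_mul_rpow {ε : ℝ} (hε : 0 < ε) :
    ∀ (i : ℕ) (a b : ℝ), DerivIsBigORpow i (fun x => log x ^ a * x ^ b) (b + ε)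
  | 0, a, b => by
    refine ((isLittleO_log_rpow_rpow_atTop a hε).isBigO.mul (isBigO_refl (fun x => x ^ b) _)).congr'
      EventuallyEq.rfl ?_
    filter_upwards [eventually_gt_atTop 0] with x hx
    rw [← rpow_add hx, add_comm]
  | i + 1, a, b => by
    refine ⟨(fun x => a * (log x ^ (a - 1) * x ^ (b - 1))) + fun x => b * (log x ^ a * x ^ (b - 1)),
      ?_, ?_⟩
    · filter_upwards [eventually_gt_atTop 1] with x hx
      have hx0 : 0 < x := by linarith
      refine (((hasDerivAt_log hx0.ne').rpow_const (Or.inl (log_pos hx).ne')).mul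
        (hasDerivAt_rpow_const (p := b) (Or.inl hx0.ne'))).congr_deriv ?_
      rw [Pi.add_apply, rpow_sub_one hx0.ne' b]
      field_simp
    · have h := ((derivIsBigORpow_log_rpow_mul_rpow hε i (a - 1) (b - 1)).const_mul a).add
        ((derivIsBigORpow_log_rpow_mul_rpow hε i a (b - 1)).const_mul b)
      rwa [show b + ε - 1 = b - 1 + ε by ring]

lemma iterate_fwdDiff_comp_natCast (f : ℝ → ℝ) (i k : ℕ) :
    Δ_[1] ^[i] (fun n : ℕ => f n) k = Δ_[1] ^[i] f k := by
  induction i generalizing f with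
  | zero => rfl
  | succ i ih =>
    have hcomm : Δ_[1] (fun n : ℕ => f n) = fun n : ℕ => Δ_[1] f n := by
      ext n
      simp [fwdDiff]
    rw [Function.iterate_succ_apply, Function.iterate_succ_apply, hcomm, ih]

lemma isBigO_iterate_fwdDiff_log_rpow_mul_rpow (r γ : ℝ) {ε : ℝ} (hε : 0 < ε) (i : ℕ) :
    Δ_[1] ^[i] (fun k : ℕ => log k ^ r * (k : ℝ) ^ γ) =O[atTop]
      fun k : ℕ => (k : ℝ) ^ (γ + ε - i) := by
  have h := ((derivIsBigORpow_log_rpow_mul_rpow hε i r γ).isBigO_iterate_fwdDiff).comp_tendsto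
    tendsto_natCast_atTop_atTop
  refine h.congr_left fun k => ?_
  exact (iterate_fwdDiff_comp_natCast (fun x => log x ^ r * x ^ γ) i k).symm

lemma abs_apply_sub_le_of_two_mul_lt {v : ℕ → ℝ} {C γ : ℝ} (hC : 0 ≤ C)
    (hv : ∀ k, 1 ≤ k → |v k| ≤ C * (k : ℝ) ^ γ) {t j : ℕ} (h : 2 * j < t) :
    |v (t - j)| ≤ C * 2 ^ |γ| * (t : ℝ) ^ γ := by
  have hcast : ((t - j : ℕ) : ℝ) = t - j := Nat.cast_sub (by omega)
  have h2 : 2 * (j : ℝ) < t := by exact_mod_cast h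
  calc |v (t - j)| ≤ C * ((t - j : ℕ) : ℝ) ^ γ := hv _ (by omega)
    _ ≤ C * (2 ^ |γ| * (t : ℝ) ^ γ) := by
        gcongr
        exact rpow_le_two_rpow_abs_mul γ (by linarith) (by rw [hcast]; linarith)
          (by rw [hcast]; linarith)
    _ = C * 2 ^ |γ| * (t : ℝ) ^ γ := by ring

def PartialFracDiffBound (ξ β : ℝ) (v : ℕ → ℝ) : Prop :=
  ∃ C ≥ 0, ∀ t n : ℕ, 2 * n ≤ t →
    |∑ j ∈ range n, deltaCoef (-ξ) j * v (t - j)| ≤ C * (t : ℝ) ^ β * ((n : ℝ) + 1) ^ (-ξ)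

lemma partialFracDiffBound_of_nonpos {ξ γ ε : ℝ} {v : ℕ → ℝ} (hε : 0 < ε) (hξ : ξ ≤ 0)
    (hv : v =O[atTop] fun k : ℕ => (k : ℝ) ^ γ) : PartialFracDiffBound ξ (γ + ε) v := by
  obtain ⟨Cd, hCd, hd⟩ := exists_abs_deltaCoef_le (-ξ)
  obtain ⟨Cv, hCv, hv⟩ := exists_abs_le_mul_rpow_of_isBigO hv
  obtain ⟨Cs, hCs, hs⟩ := exists_sum_range_rpow_le (-ξ - 1) hε
  refine ⟨Cd * Cv * 2 ^ |γ| * Cs, by positivity, fun t n hn => ?_⟩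
  rcases n.eq_zero_or_pos with rfl | hn0
  · simp only [range_zero, sum_empty, abs_zero]
    positivity
  have ht : (0 : ℝ) < t := by exact_mod_cast (show 0 < t by omega)
  have hnt : (n : ℝ) + 1 ≤ t := by exact_mod_cast (show n + 1 ≤ t by omega)
  have hs' : ∑ j ∈ range n, ((j : ℝ) + 1) ^ (-ξ - 1) ≤ Cs * ((n : ℝ) + 1) ^ (-ξ + ε) := by
    have hmono : (n : ℝ) ^ (-ξ + ε) ≤ ((n : ℝ) + 1) ^ (-ξ + ε) :=
      rpow_le_rpow (by positivity) (by linarith) (by linarith)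
    have := hs n
    rw [show max (-ξ - 1 + 1) 0 = -ξ by rw [sub_add_cancel, max_eq_left (by linarith)]] at this
    grw [this, hmono]
  calc |∑ j ∈ range n, deltaCoef (-ξ) j * v (t - j)|
      ≤ ∑ j ∈ range n, Cd * ((j : ℝ) + 1) ^ (-ξ - 1) * (Cv * 2 ^ |γ| * (t : ℝ) ^ γ) := by
        refine (abs_sum_le_sum_abs _ _).trans (sum_le_sum fun j hj => ?_)
        have := mem_range.1 hj
        rw [abs_mul]
        exact mul_le_mul (hd j) (abs_apply_sub_le_of_two_mul_lt hCv.le hv (by omega))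
          (abs_nonneg _) (by positivity)
    _ = Cd * Cv * 2 ^ |γ| * (t : ℝ) ^ γ * ∑ j ∈ range n, ((j : ℝ) + 1) ^ (-ξ - 1) := by
        rw [mul_sum]
        exact sum_congr rfl fun j _ => by ring
    _ ≤ Cd * Cv * 2 ^ |γ| * (t : ℝ) ^ γ * (Cs * (((n : ℝ) + 1) ^ (-ξ) * (t : ℝ) ^ ε)) := by
        grw [hs', rpow_add (by positivity)]
        gcongr
    _ = Cd * Cv * 2 ^ |γ| * Cs * (t : ℝ) ^ (γ + ε) * ((n : ℝ) + 1) ^ (-ξ) := by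
        rw [rpow_add ht]
        ring

lemma PartialFracDiffBound.of_fwdDiff {ξ β γ : ℝ} {v : ℕ → ℝ}
    (h : PartialFracDiffBound (ξ - 1) (β - 1) (Δ_[1] v))
    (hv : v =O[atTop] fun k : ℕ => (k : ℝ) ^ γ) (hγ : γ ≤ β) : PartialFracDiffBound ξ β v := by
  obtain ⟨C₀, hC₀, h₀⟩ := h
  obtain ⟨Cd, hCd, hd⟩ := exists_abs_deltaCoef_le (-ξ + 1)
  obtain ⟨Cv, hCv, hv⟩ := exists_abs_le_mul_rpow_of_isBigO hv
  refine ⟨(C₀ * 2 ^ |β - 1| + Cd * Cv * 2 ^ |γ|) * 2 ^ |ξ|, by positivity, fun t n hn => ?_⟩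
  rcases n with _ | n
  · simp only [range_zero, sum_empty, abs_zero]
    positivity
  obtain ⟨t, rfl⟩ : ∃ s, t = s + 1 := ⟨t - 1, by omega⟩
  have ht : (1 : ℝ) ≤ t := by exact_mod_cast (show 1 ≤ t by omega)
  have hnt : (n : ℝ) + 1 ≤ t + 1 := by exact_mod_cast (show n + 1 ≤ t + 1 by omega)
  have hn2 : ((n : ℝ) + 1) ^ (-ξ) ≤ 2 ^ |ξ| * ((n : ℝ) + 2) ^ (-ξ) := by
    simpa using rpow_le_two_rpow_abs_mul (-ξ) (by positivity : (0 : ℝ) < n + 2)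
      (by linarith) (by linarith)
  have hmain : |∑ j ∈ range n, deltaCoef (-ξ + 1) j * Δ_[1] v (t - j)|
      ≤ C₀ * 2 ^ |β - 1| * 2 ^ |ξ| * ((t : ℝ) + 1) ^ β * ((n : ℝ) + 2) ^ (-ξ) := by
    have h := h₀ t n (by omega)
    rw [show -(ξ - 1) = -ξ + 1 by ring, rpow_add_one (by positivity)] at h
    refine h.trans ?_
    calc C₀ * (t : ℝ) ^ (β - 1) * (((n : ℝ) + 1) ^ (-ξ) * ((n : ℝ) + 1))
        ≤ C₀ * (2 ^ |β - 1| * ((t : ℝ) + 1) ^ (β - 1))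
          * ((2 ^ |ξ| * ((n : ℝ) + 2) ^ (-ξ)) * ((t : ℝ) + 1)) := by
          gcongr
          exact rpow_le_two_rpow_abs_mul _ (by positivity) (by linarith) (by linarith)
      _ = _ := by
          rw [mul_mul_mul_comm, mul_assoc (2 ^ |β - 1|), ← rpow_add_one (by positivity),
            sub_add_cancel]
          ring
  have hbdry : |deltaCoef (-ξ + 1) n * v (t + 1 - n)|
      ≤ Cd * Cv * 2 ^ |γ| * 2 ^ |ξ| * ((t : ℝ) + 1) ^ β * ((n : ℝ) + 2) ^ (-ξ) := by
    have h1 : |deltaCoef (-ξ + 1) n| ≤ Cd * (2 ^ |ξ| * ((n : ℝ) + 2) ^ (-ξ)) := by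
      grw [hd n, add_sub_cancel_right, hn2]
    have h2 : |v (t + 1 - n)| ≤ Cv * 2 ^ |γ| * ((t : ℝ) + 1) ^ β := by
      grw [abs_apply_sub_le_of_two_mul_lt hCv.le hv (by omega : 2 * n < t + 1)]
      push_cast
      gcongr
      linarith
    rw [abs_mul]
    grw [h1, h2]
    exact le_of_eq (by ring)
  rw [sum_deltaCoef_mul_eq_sum_fwdDiff _ _ (by omega : n ≤ t), Nat.cast_succ, Nat.cast_succ,
    show (n : ℝ) + 1 + 1 = n + 2 by ring]
  calc _ ≤ _ := abs_add_le _ _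
    _ ≤ _ := add_le_add hmain hbdry
    _ = _ := by ring

lemma partialFracDiffBound_of_isBigO_iterate_fwdDiff (m : ℕ) :
    ∀ {ξ γ ε : ℝ} {v : ℕ → ℝ}, 0 < ε → ξ ≤ m →
      (∀ i ≤ m, Δ_[1] ^[i] v =O[atTop] fun k : ℕ => (k : ℝ) ^ (γ - i)) →
      PartialFracDiffBound ξ (γ + ε) v := by
  induction m with
  | zero =>
    intro ξ γ ε v hε hξ hv
    exact partialFracDiffBound_of_nonpos hε (by simpa using hξ) (by simpa using hv 0 le_rfl)
  | succ m ih =>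
    intro ξ γ ε v hε hξ hv
    refine PartialFracDiffBound.of_fwdDiff ?_ (by simpa using hv 0 (Nat.zero_le _))
      (by linarith : γ ≤ γ + ε)
    rw [show γ + ε - 1 = γ - 1 + ε by ring]
    refine ih hε (by push_cast at hξ; linarith) fun i hi => ?_
    have h := hv (i + 1) (by omega)
    rw [Function.iterate_succ_apply] at h
    convert h using 3
    push_cast
    ring

lemma PartialFracDiffBound.isBigO_sum_range_half {ξ β : ℝ} {v : ℕ → ℝ}
    (h : PartialFracDiffBound ξ β v) :
    (fun t : ℕ => ∑ j ∈ range (t / 2), deltaCoef (-ξ) j * v (t - j)) =O[atTop]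
      fun t : ℕ => (t : ℝ) ^ (β - ξ) := by
  obtain ⟨C, hC, h⟩ := h
  refine IsBigO.of_bound (C * 2 ^ |ξ|) ?_
  filter_upwards [eventually_ge_atTop 1] with t ht
  have ht0 : (0 : ℝ) < t := by exact_mod_cast ht
  have h1 : ((t / 2 : ℕ) : ℝ) + 1 ≤ t := by exact_mod_cast (show t / 2 + 1 ≤ t by omega)
  have h2 : (t : ℝ) ≤ 2 * (((t / 2 : ℕ) : ℝ) + 1) := by
    exact_mod_cast (show t ≤ 2 * (t / 2 + 1) by omega)
  rw [Real.norm_eq_abs, norm_of_nonneg (by positivity)]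
  calc _ ≤ C * (t : ℝ) ^ β * (((t / 2 : ℕ) : ℝ) + 1) ^ (-ξ) := h t (t / 2) (by omega)
    _ ≤ C * (t : ℝ) ^ β * (2 ^ |ξ| * (t : ℝ) ^ (-ξ)) := by
        gcongr
        simpa using rpow_le_two_rpow_abs_mul (-ξ) ht0 (by linarith) h2
    _ = C * 2 ^ |ξ| * (t : ℝ) ^ (β - ξ) := by
        rw [sub_eq_add_neg, rpow_add ht0]
        ring

lemma sum_Ico_abs_apply_sub_le (v : ℕ → ℝ) (n t : ℕ) :
    ∑ j ∈ Ico n t, |v (t - j)| ≤ ∑ k ∈ range t, |v (k + 1)| := by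
  calc ∑ j ∈ Ico n t, |v (t - j)| ≤ ∑ j ∈ range t, |v (t - j)| :=
        sum_le_sum_of_subset_of_nonneg (fun j hj => mem_range.2 (mem_Ico.1 hj).2)
          fun _ _ _ => abs_nonneg _
    _ = ∑ k ∈ range t, |v (k + 1)| := by
        rw [← sum_range_reflect]
        refine sum_congr rfl fun k hk => ?_
        rw [show t - (t - 1 - k) = k + 1 by have := mem_range.1 hk; omega]

lemma isBigO_sum_Ico_half_deltaCoef_mul {ξ β ε : ℝ} (hε : 0 < ε) {v : ℕ → ℝ}
    (hv : v =O[atTop] fun k : ℕ => (k : ℝ) ^ β) :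
    (fun t : ℕ => ∑ j ∈ Ico (t / 2) t, deltaCoef (-ξ) j * v (t - j)) =O[atTop]
      fun t : ℕ => (t : ℝ) ^ (max β (-1) - ξ + ε) := by
  obtain ⟨Cd, hCd, hd⟩ := exists_abs_deltaCoef_le (-ξ)
  obtain ⟨Cv, hCv, hv1⟩ := exists_abs_le_mul_rpow_of_isBigO hv
  obtain ⟨Cs, hCs, hs⟩ := exists_sum_range_rpow_le β hε
  refine IsBigO.of_bound (Cd * 2 ^ |-ξ - 1| * Cv * Cs) ?_
  filter_upwards [eventually_ge_atTop 1] with t ht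
  have ht0 : (0 : ℝ) < t := by exact_mod_cast ht
  have hcoef : ∀ j ∈ Ico (t / 2) t,
      |deltaCoef (-ξ) j| ≤ Cd * 2 ^ |-ξ - 1| * (t : ℝ) ^ (-ξ - 1) := by
    intro j hj
    obtain ⟨h1, h2⟩ := mem_Ico.1 hj
    have h1' : (t : ℝ) ≤ 2 * ((j : ℝ) + 1) := by exact_mod_cast (show t ≤ 2 * (j + 1) by omega)
    have h2' : (j : ℝ) + 1 ≤ t := by exact_mod_cast (show j + 1 ≤ t by omega)
    calc |deltaCoef (-ξ) j| ≤ Cd * ((j : ℝ) + 1) ^ (-ξ - 1) := hd j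
      _ ≤ Cd * (2 ^ |-ξ - 1| * (t : ℝ) ^ (-ξ - 1)) := by
          gcongr
          exact rpow_le_two_rpow_abs_mul _ ht0 (by linarith) h1'
      _ = _ := by ring
  have hsum : ∑ j ∈ Ico (t / 2) t, |v (t - j)| ≤ Cv * Cs * (t : ℝ) ^ (max (β + 1) 0 + ε) := by
    calc ∑ j ∈ Ico (t / 2) t, |v (t - j)| ≤ ∑ k ∈ range t, |v (k + 1)| :=
          sum_Ico_abs_apply_sub_le v _ t
      _ ≤ ∑ k ∈ range t, Cv * ((k : ℝ) + 1) ^ β :=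
          sum_le_sum fun k _ => by simpa using hv1 (k + 1) (by omega)
      _ ≤ Cv * (Cs * (t : ℝ) ^ (max (β + 1) 0 + ε)) := by
          rw [← mul_sum]
          gcongr
          exact hs t
      _ = _ := by ring
  have hexp : max β (-1) - ξ + ε = (-ξ - 1) + (max (β + 1) 0 + ε) := by
    rw [show (0 : ℝ) = -1 + 1 by norm_num, max_add_add_right]
    ring
  rw [Real.norm_eq_abs, norm_of_nonneg (by positivity), hexp, rpow_add ht0]
  calc |∑ j ∈ Ico (t / 2) t, deltaCoef (-ξ) j * v (t - j)|
      ≤ ∑ j ∈ Ico (t / 2) t, Cd * 2 ^ |-ξ - 1| * (t : ℝ) ^ (-ξ - 1) * |v (t - j)| := by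
        refine (abs_sum_le_sum_abs _ _).trans (sum_le_sum fun j hj => ?_)
        rw [abs_mul]
        exact mul_le_mul_of_nonneg_right (hcoef j hj) (abs_nonneg _)
    _ ≤ Cd * 2 ^ |-ξ - 1| * (t : ℝ) ^ (-ξ - 1) * (Cv * Cs * (t : ℝ) ^ (max (β + 1) 0 + ε)) := by
        rw [← mul_sum]
        gcongr
    _ = _ := by ring

open Filter in
theorem stmt3_general (γ ξ r : ℝ) (δ : ℝ) (hδ : 0 < δ) :
    (fun t : ℕ => ∑ j ∈ Finset.range t,
        deltaCoef (-ξ) j * Real.log ((t : ℝ) - j) ^ r * ((t : ℝ) - j) ^ γ)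
      =O[atTop]
    (fun t : ℕ => (t : ℝ) ^ (max γ (-1) - ξ + δ)) := by
  have hε : 0 < δ / 2 := half_pos hδ
  have hw := isBigO_iterate_fwdDiff_log_rpow_mul_rpow r γ hε
  obtain ⟨m, hm⟩ := exists_nat_ge ξ
  have hfar := (partialFracDiffBound_of_isBigO_iterate_fwdDiff m hε hm fun i _ => hw i
    ).isBigO_sum_range_half
  have hnear := isBigO_sum_Ico_half_deltaCoef_mul (ξ := ξ) hε (by simpa using hw 0)
  refine ((hfar.trans (isBigO_natCast_rpow_rpow ?_)).add
    (hnear.trans (isBigO_natCast_rpow_rpow ?_))).congr_left fun t => ?_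
  · linarith [le_max_left γ (-1)]
  · have : max (γ + δ / 2) (-1) ≤ max γ (-1) + δ / 2 :=
      max_le (by linarith [le_max_left γ (-1)]) (by linarith [le_max_right γ (-1)])
    linarith
  · rw [sum_range_add_sum_Ico _ (Nat.div_le_self t 2)]
    refine sum_congr rfl fun j hj => ?_
    rw [Nat.cast_sub (mem_range.1 hj).le, mul_assoc]

open Filter in
theorem stmt3 (γ ξ r : ℝ) (hr : 0 ≤ r) (hξ : -(1/2) < ξ) (δ : ℝ) (hδ : 0 < δ) :
    (fun t : ℕ => ∑ j ∈ Finset.range t,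
        deltaCoef (-ξ) j * Real.log ((t : ℝ) - j) ^ r * ((t : ℝ) - j) ^ γ)
      =O[atTop]
    (fun t : ℕ => (t : ℝ) ^ (max γ (-1) - ξ + δ)) :=
  stmt3_general γ ξ r δ hδ
end

section
/- Let S_m be the m×m matrix with (j,k)-th entry ∫_{-1}^{1} u^{j+k-2} du = 2/(j+k-1) if j+k is even and 0 if j+k is odd. Then S_m is invertible, and for all sufficiently large m, tr(S_m^{-1}) < (2π)^{-2} [8/3 + (1/2) log{(2m-3)(2m/3 - 1)}] (1+√2)^{2m}. -/
set_option maxHeartbeats 1000000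

open Polynomial Matrix intervalIntegral

/-- The `m × m` Gram matrix of monomials `1, u, …, u^{m-1}` on `[-1,1]`:
its `(j,k)` entry (with `1`-based indices) is `∫_{-1}^1 u^{j+k-2} du`,
i.e. `2/(j+k-1)` when `j+k` is even and `0` when `j+k` is odd. -/
noncomputable def Smat (m : ℕ) : Matrix (Fin m) (Fin m) ℝ :=
  fun j k => if Even ((j : ℕ) + (k : ℕ)) then 2 / ((j : ℕ) + (k : ℕ) + 1 : ℝ) else 0

namespace Stmt7Aux



noncomputable def LL (p : Polynomial ℝ) : ℝ := ∫ x in (-1:ℝ)..1, p.eval x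

lemma LL_add (p q : Polynomial ℝ) : LL (p + q) = LL p + LL q := by
  unfold LL
  simp only [eval_add]
  exact intervalIntegral.integral_add (p.continuous_aeval.intervalIntegrable _ _)
    (q.continuous_aeval.intervalIntegrable _ _)

lemma LL_Xpow (k : ℕ) : LL (X ^ k) = if Even k then 2 / ((k:ℝ)+1) else 0 := by
  unfold LL
  simp only [eval_pow, eval_X]
  rw [integral_pow]
  rcases Nat.even_or_odd k with h | h
  · have : Odd (k+1) := Even.add_one h
    rw [if_pos h, this.neg_one_pow]
    ring
  · have : Even (k+1) := Odd.add_one h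
    rw [if_neg (Nat.not_even_iff_odd.mpr h), this.neg_one_pow]
    ring



lemma LL_Cmul (c : ℝ) (p : Polynomial ℝ) : LL (C c * p) = c * LL p := by
  unfold LL
  simp only [eval_mul, eval_C]
  exact intervalIntegral.integral_const_mul c _

lemma LL_sub (p q : Polynomial ℝ) : LL (p - q) = LL p - LL q := by
  unfold LL
  simp only [eval_sub]
  exact intervalIntegral.integral_sub (p.continuous_aeval.intervalIntegrable _ _)
    (q.continuous_aeval.intervalIntegrable _ _)

lemma LL_sum {s : Finset ℕ} (f : ℕ → Polynomial ℝ) : LL (∑ i ∈ s, f i) = ∑ i ∈ s, LL (f i) := by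
  unfold LL
  simp only [eval_finset_sum]
  exact intervalIntegral.integral_finset_sum (fun i _ => ((f i).continuous_aeval.intervalIntegrable _ _))

/-- Legendre polynomials by recurrence -/
noncomputable def Leg : ℕ → Polynomial ℝ
  | 0 => 1
  | 1 => X
  | (n+2) => C ((2*(n:ℝ)+3)/((n:ℝ)+2)) * (X * Leg (n+1)) - C (((n:ℝ)+1)/((n:ℝ)+2)) * Leg n

lemma Leg_natDegree_le (n : ℕ) : (Leg n).natDegree ≤ n := by
  induction n using Nat.strong_induction_on with
  | _ n ih =>
    match n with
    | 0 => simp [Leg]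
    | 1 => simp [Leg, natDegree_X_le]
    | (n+2) =>
      rw [Leg]
      refine le_trans (natDegree_sub_le _ _) (max_le ?_ ?_)
      · refine le_trans (natDegree_C_mul_le _ _) ?_
        refine le_trans (natDegree_mul_le) ?_
        have := ih (n+1) (by omega)
        simpa [natDegree_X] using by omega
      · exact le_trans (natDegree_C_mul_le _ _) (le_trans (ih n (by omega)) (by omega))

lemma Leg_coeff_zero (n j : ℕ) (h : n < j) : (Leg n).coeff j = 0 :=
  coeff_eq_zero_of_natDegree_lt (lt_of_le_of_lt (Leg_natDegree_le n) h)

/-- leading coefficients -/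
noncomputable def lc (n : ℕ) : ℝ := (Nat.factorial (2*n) : ℝ) / (2^n * (Nat.factorial n)^2)

lemma lc_pos (n : ℕ) : 0 < lc n := by
  unfold lc
  positivity

lemma Leg_coeff_self (n : ℕ) : (Leg n).coeff n = lc n := by
  induction n using Nat.strong_induction_on with
  | _ n ih =>
    match n with
    | 0 => simp [Leg, lc]
    | 1 => simp [Leg, lc, Nat.factorial]
    | (n+2) =>
      rw [Leg]
      have h1 : (X * Leg (n+1)).coeff (n+2) = (Leg (n+1)).coeff (n+1) := by
        rw [coeff_X_mul]
      rw [coeff_sub, coeff_C_mul, coeff_C_mul, h1, ih (n+1) (by omega),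
        Leg_coeff_zero n (n+2) (by omega)]
      unfold lc
      have h2 : (2*(n+2)) = (2*(n+1))+1+1 := by ring
      have h3 : (2*(n+1)) = (2*n)+1+1 := by ring
      rw [h2]
      simp only [Nat.factorial_succ, Nat.factorial]
      push_cast
      have hf1 : (Nat.factorial (n+1) : ℝ) ≠ 0 := by positivity
      have hf2 : (Nat.factorial (2*(n+1)) : ℝ) ≠ 0 := by positivity
      field_simp
      ring


lemma Leg_eval_neg (n : ℕ) (x : ℝ) : (Leg n).eval (-x) = (-1)^n * (Leg n).eval x := by
  induction n using Nat.strong_induction_on generalizing x with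
  | _ n ih =>
    match n with
    | 0 => simp [Leg]
    | 1 => simp [Leg]
    | (n+2) =>
      simp only [Leg, eval_sub, eval_mul, eval_C, eval_X, ih (n+1) (by omega), ih n (by omega)]
      ring

noncomputable def Mo (n j : ℕ) : ℝ := LL (Leg n * X ^ j)

lemma Mo_odd (n j : ℕ) (h : Odd (n + j)) : Mo n j = 0 := by
  unfold Mo LL
  have key : ∀ x : ℝ, (Leg n * X ^ j).eval (-x) = - (Leg n * X ^ j).eval x := by
    intro x
    simp only [eval_mul, eval_pow, eval_X, Leg_eval_neg]
    rw [neg_pow x j]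
    have : (-1:ℝ)^n * ((-1)^j) = -1 := by
      rw [← pow_add]; exact Odd.neg_one_pow h
    calc (-1:ℝ)^n * eval x (Leg n) * ((-1)^j * x^j) = ((-1:ℝ)^n * (-1)^j) * (eval x (Leg n) * x^j) := by ring
      _ = - (eval x (Leg n) * x ^ j) := by rw [this]; ring
  have h1 : (∫ x in (-1:ℝ)..1, (Leg n * X ^ j).eval (-x)) = ∫ x in (-1:ℝ)..1, (Leg n * X ^ j).eval x := by
    have := integral_comp_neg (a := (-1:ℝ)) (b := 1) (f := fun x => (Leg n * X ^ j).eval x)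
    norm_num at this ⊢
    exact this
  have h2 : (∫ x in (-1:ℝ)..1, (Leg n * X ^ j).eval (-x)) = ∫ x in (-1:ℝ)..1, -(Leg n * X ^ j).eval x := by
    congr 1; ext x; exact key x
  rw [h2, intervalIntegral.integral_neg] at h1
  linarith


noncomputable def Gm (n t : ℕ) : ℝ :=
  2^(n+1) * (Nat.factorial (n+2*t)) * (Nat.factorial (n+t)) /
    ((Nat.factorial t) * (Nat.factorial (2*n+2*t+1)))

lemma Fsucc (k : ℕ) : (Nat.factorial (k+1) : ℝ) = ((k:ℝ)+1) * Nat.factorial k := by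
  push_cast [Nat.factorial_succ]; ring

lemma Fne (k : ℕ) : (Nat.factorial k : ℝ) ≠ 0 := by positivity

lemma Gm_zero (n : ℕ) : Gm n 0 = 2^(n+1) * (Nat.factorial n)^2 / (Nat.factorial (2*n+1)) := by
  unfold Gm
  norm_num
  ring

lemma Gm_diag (n : ℕ) :
    ((2*(n:ℝ)+3)/((n:ℝ)+2)) * Gm (n+1) 0 - (((n:ℝ)+1)/((n:ℝ)+2)) * Gm n 0 = 0 := by
  rw [Gm_zero, Gm_zero]
  simp only [show 2*(n+1)+1 = (2*n+1)+1+1 from by ring, Fsucc]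
  push_cast
  have h2 : ((n:ℝ)+2) ≠ 0 := by positivity
  field_simp
  ring

lemma Gm_rec (n t : ℕ) :
    ((2*(n:ℝ)+3)/((n:ℝ)+2)) * Gm (n+1) (t+1) - (((n:ℝ)+1)/((n:ℝ)+2)) * Gm n (t+1)
      = Gm (n+2) t := by
  unfold Gm
  rw [show n+1+2*(t+1) = (n+2*t)+2+1 from by ring,
      show n+2+2*t = (n+2*t)+2 from by ring,
      show n+2*(t+1) = (n+2*t)+1+1 from by ring,
      show n+1+(t+1) = (n+t)+1+1 from by ring,
      show n+2+t = (n+t)+1+1 from by ring,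
      show n+(t+1) = (n+t)+1 from by ring,
      show 2*(n+1)+2*(t+1)+1 = (2*n+2*t+1)+1+1+1+1 from by ring,
      show 2*n+2*(t+1)+1 = (2*n+2*t+1)+1+1 from by ring,
      show 2*(n+2)+2*t+1 = (2*n+2*t+1)+1+1+1+1 from by ring]
  simp only [Fsucc]
  push_cast
  have h2 : ((n:ℝ)+2) ≠ 0 := by positivity
  have h3 : ((t:ℝ)+1) ≠ 0 := by positivity
  field_simp
  ring


lemma Leg_def0 : Leg 0 = 1 := rfl
lemma Leg_def1 : Leg 1 = X := rfl
lemma Leg_def2 (n : ℕ) : Leg (n+2) = C ((2*(n:ℝ)+3)/((n:ℝ)+2)) * (X * Leg (n+1)) - C (((n:ℝ)+1)/((n:ℝ)+2)) * Leg n := rfl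
lemma Mo_def' (n j : ℕ) : Mo n j = LL (Leg n * X ^ j) := rfl
lemma Gm_def (n t : ℕ) : Gm n t = 2^(n+1) * (Nat.factorial (n+2*t)) * (Nat.factorial (n+t)) /
    ((Nat.factorial t) * (Nat.factorial (2*n+2*t+1))) := rfl
lemma lc_eq (n : ℕ) : lc n = (Nat.factorial (2*n) : ℝ) / (2^n * (Nat.factorial n)^2) := rfl
lemma Leg_coeff_self_ne (n : ℕ) : (Leg n).coeff n ≠ 0 := by
  rw [Leg_coeff_self]; exact (lc_pos n).ne'

lemma Mo_rec (n j : ℕ) :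
    Mo (n+2) j = ((2*(n:ℝ)+3)/((n:ℝ)+2)) * Mo (n+1) (j+1) - (((n:ℝ)+1)/((n:ℝ)+2)) * Mo n j := by
  rw [Mo_def', Mo_def', Mo_def']
  have : Leg (n+2) * X ^ j
      = C ((2*(n:ℝ)+3)/((n:ℝ)+2)) * (Leg (n+1) * X^(j+1)) - C (((n:ℝ)+1)/((n:ℝ)+2)) * (Leg n * X^j) := by
    rw [Leg_def2]; ring
  rw [this, LL_sub, LL_Cmul, LL_Cmul]

lemma Mo_zero_base (j : ℕ) : Mo 0 j = LL (X ^ j) := by rw [Mo_def', Leg_def0, one_mul]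
lemma Mo_one_base (j : ℕ) : Mo 1 j = LL (X ^ (j+1)) := by
  rw [Mo_def', Leg_def1, ← pow_succ']

theorem Mo_eval (n : ℕ) : (∀ j, j < n → Mo n j = 0) ∧ (∀ t, Mo n (n+2*t) = Gm n t) := by
  induction n using Nat.strong_induction_on with
  | _ n ih =>
    match n with
    | 0 =>
      refine ⟨fun j hj => absurd hj (by omega), fun t => ?_⟩
      rw [show 0+2*t = 2*t from by ring, Mo_zero_base, LL_Xpow, if_pos (even_two_mul t), Gm_def]
      rw [show 2*0+2*t+1 = 2*t+1 from by ring, show (0:ℕ)+2*t = 2*t from by ring, Fsucc]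
      push_cast
      field_simp
      ring
    | 1 =>
      refine ⟨fun j hj => ?_, fun t => ?_⟩
      · interval_cases j
        exact Mo_odd 1 0 (by decide)
      · rw [Mo_one_base, LL_Xpow, if_pos (by exact ⟨t+1, by ring⟩), Gm_def]
        rw [show 2*1+2*t+1 = (2*t+1)+1+1 from by ring, show (1:ℕ)+2*t+1 = (2*t+1)+1 from by ring,
          show (1:ℕ)+2*t = 2*t+1 from by ring, show (1:ℕ)+t = t+1 from by ring]
        simp only [Fsucc]
        push_cast
        have h3 : ((t:ℝ)+1) ≠ 0 := by positivity
        have h4 : (2*(t:ℝ)+3) ≠ 0 := by positivity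
        field_simp
        ring
    | (n+2) =>
      have hn2 : ((n:ℝ)+2) ≠ 0 := by positivity
      obtain ⟨ih1a, ih1b⟩ := ih (n+1) (by omega)
      obtain ⟨ih0a, ih0b⟩ := ih n (by omega)
      constructor
      · intro j hj
        rcases Nat.even_or_odd (n + j) with hpar | hpar
        · -- even n+j
          rcases lt_trichotomy j n with h | h | h
          · rw [Mo_rec, ih1a (j+1) (by omega), ih0a j h, mul_zero, mul_zero, sub_zero]
          · subst h
            rw [Mo_rec]
            have e1 : Mo (j+1) (j+1) = Gm (j+1) 0 := by
              have := ih1b 0; simpa using this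
            have e0 : Mo j j = Gm j 0 := by
              have := ih0b 0; simpa using this
            rw [e1, e0]
            exact Gm_diag j
          · -- j = n+1 (since j < n+2), but then n+j = 2n+1 odd, contradiction
            exfalso
            have : j = n+1 := by omega
            subst this
            exact (Nat.not_even_iff_odd.mpr ⟨n, by ring⟩) hpar
        · exact Mo_odd (n+2) j (by
            rcases hpar with ⟨k, hk⟩
            exact ⟨k+1, by omega⟩)
      · intro t
        rw [Mo_rec]
        have e1 : Mo (n+1) (n+2+2*t+1) = Gm (n+1) (t+1) := by
          have := ih1b (t+1)
          rw [show n+1+2*(t+1) = n+2+2*t+1 from by ring] at this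
          exact this
        have e0 : Mo n (n+2+2*t) = Gm n (t+1) := by
          have := ih0b (t+1)
          rw [show n+2*(t+1) = n+2+2*t from by ring] at this
          exact this
        rw [e1, e0]
        exact Gm_rec n t


lemma key_ineq (n : ℕ) :
    (2*(n:ℝ)+3)*(1+Real.sqrt 2)/Real.sqrt ((n:ℝ)+2) + ((n:ℝ)+1)/Real.sqrt ((n:ℝ)+1)
      ≤ ((n:ℝ)+2)*(1+Real.sqrt 2)^2/Real.sqrt ((n:ℝ)+3) := by
  set x : ℝ := (n:ℝ) with hx
  have hx0 : 0 ≤ x := Nat.cast_nonneg n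
  set r := Real.sqrt 2 with hrdef
  have hr2 : r^2 = 2 := Real.sq_sqrt (by norm_num)
  have hr0 : 0 < r := Real.sqrt_pos.mpr (by norm_num)
  have hr1 : 1 < r := by nlinarith
  set s1 := Real.sqrt (x+1) with hs1def
  set s2 := Real.sqrt (x+2) with hs2def
  set s3 := Real.sqrt (x+3) with hs3def
  have hs1 : 0 < s1 := Real.sqrt_pos.mpr (by linarith)
  have hs2 : 0 < s2 := Real.sqrt_pos.mpr (by linarith)
  have hs3 : 0 < s3 := Real.sqrt_pos.mpr (by linarith)
  have hs1q : s1^2 = x+1 := Real.sq_sqrt (by linarith)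
  have hs2q : s2^2 = x+2 := Real.sq_sqrt (by linarith)
  have hs3q : s3^2 = x+3 := Real.sq_sqrt (by linarith)
  set u := s1 * s3 with hudef
  have hu0 : 0 < u := mul_pos hs1 hs3
  have huq : u^2 = (x+1)*(x+3) := by rw [hudef, mul_pow, hs1q, hs3q]
  set e2 : ℝ := 3 + 2*r with he2def
  have he2 : (1+r)^2 = e2 := by rw [he2def]; nlinarith
  set e4 : ℝ := 17 + 12*r with he4def
  have he4 : e2^2 = e4 := by rw [he2def, he4def]; nlinarith
  -- rewrite second summand
  have hsub : (x+1)/s1 = s1 := by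
    rw [← hs1q]; field_simp
  rw [hsub, he2]
  -- V ≥ 0 and main quantities
  set V : ℝ := (x+2)^3*e4 + (x+2)*(x+1)*(x+3) - (2*x+3)^2*(x+3)*e2 with hVdef
  have hV : V = (6+4*r)*x^3 + (36+24*r)*x^2 + (80+54*r)*x + (61+42*r) := by
    rw [hVdef, he2def, he4def]; ring
  have hV0 : 0 ≤ V := by rw [hV]; positivity
  -- step: 2*(x+2)^2*e2*u ≤ V
  have hstep : 2*(x+2)^2*e2*u ≤ V := by
    have hDelta : V^2 - (2*(x+2)^2*e2*u)^2
        = (260+184*r)*x^4 + (2012+1424*r)*x^3 + (5968+4224*r)*x^2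
          + (7952+5628*r)*x + (3985+2820*r) := by
      rw [hV, mul_pow, mul_pow, mul_pow, huq, he2def]
      linear_combination (64*x^4+496*x^3+1476*x^2+1976*x+996) * hr2
    have hpos : 0 ≤ V^2 - (2*(x+2)^2*e2*u)^2 := by
      rw [hDelta]; positivity
    have h1 : 0 ≤ 2*(x+2)^2*e2*u := by positivity
    have h2 : (2*(x+2)^2*e2*u)^2 ≤ V^2 := by linarith
    exact le_of_pow_le_pow_left₀ two_ne_zero hV0 h2
  -- conclude: (2x+3)(1+r)/s2 ≤ ((x+2)e2 - u)/s3 and ((x+2)e2-u)/s3 = (x+2)e2/s3 - s1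
  have hCs : ((x+2)*e2 - u)/s3 = (x+2)*e2/s3 - s1 := by
    rw [hudef]; field_simp
  have hub : u ≤ (x+2)*e2 := by
    have h1 : u^2 ≤ (x+2)^2 := by rw [huq]; nlinarith
    have h2 : u ≤ x+2 := le_of_pow_le_pow_left₀ two_ne_zero (by linarith) h1
    nlinarith [hr0]
  have hmain : (2*x+3)*(1+r)/s2 ≤ ((x+2)*e2 - u)/s3 := by
    rw [div_le_div_iff₀ hs2 hs3]
    have hL0 : 0 ≤ (2*x+3)*(1+r) := by positivity
    have hR0 : 0 ≤ ((x+2)*e2 - u) := by linarith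
    have hsq : ((2*x+3)*(1+r)*s3)^2 ≤ (((x+2)*e2 - u)*s2)^2 := by
      have e1 : ((2*x+3)*(1+r)*s3)^2 = (2*x+3)^2*e2*(x+3) := by
        rw [mul_pow, mul_pow, hs3q]
        linear_combination ((2*x+3)^2*(x+3)) * he2
      have e2' : (((x+2)*e2 - u)*s2)^2 = ((x+2)^2*e4 - 2*(x+2)*e2*u + (x+1)*(x+3))*(x+2) := by
        rw [mul_pow, hs2q]
        linear_combination (x+2)^3 * he4 + (x+2) * huq
      rw [e1, e2']
      have hstep' := hstep
      rw [hVdef] at hstep'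
      nlinarith [hstep']
    have := le_of_pow_le_pow_left₀ (by norm_num) (mul_nonneg hR0 hs2.le) hsq
    linarith [this]
  calc (2*x+3)*(1+r)/s2 + s1 ≤ ((x+2)*e2 - u)/s3 + s1 := by linarith [hmain]
    _ = (x+2)*e2/s3 := by rw [hCs]; ring

noncomputable def AA (n : ℕ) : ℝ := ∑ j ∈ Finset.range (n+1), |(Leg n).coeff j|

lemma AA_nonneg (n : ℕ) : 0 ≤ AA n := Finset.sum_nonneg fun _ _ => abs_nonneg _

lemma AA_rec (n : ℕ) :
    AA (n+2) ≤ ((2*(n:ℝ)+3)/((n:ℝ)+2)) * AA (n+1) + (((n:ℝ)+1)/((n:ℝ)+2)) * AA n := by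
  have ha : (0:ℝ) ≤ (2*(n:ℝ)+3)/((n:ℝ)+2) := by positivity
  have hb : (0:ℝ) ≤ ((n:ℝ)+1)/((n:ℝ)+2) := by positivity
  have hS1 : ∑ j ∈ Finset.range (n+3), |(X * Leg (n+1)).coeff j| = AA (n+1) := by
    rw [show n+3 = (n+2)+1 from rfl,
      Finset.sum_range_succ']
    simp only [coeff_X_mul]
    rw [mul_coeff_zero, coeff_X_zero, zero_mul, abs_zero, add_zero]
    rfl
  have hS0 : ∑ j ∈ Finset.range (n+3), |(Leg n).coeff j| = AA n := by
    rw [Finset.sum_range_succ, Finset.sum_range_succ,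
      Leg_coeff_zero n (n+1) (by omega), Leg_coeff_zero n (n+2) (by omega)]
    simp [AA]
  calc AA (n+2) = ∑ j ∈ Finset.range (n+3), |(Leg (n+2)).coeff j| := rfl
    _ ≤ ∑ j ∈ Finset.range (n+3),
        (((2*(n:ℝ)+3)/((n:ℝ)+2)) * |(X * Leg (n+1)).coeff j|
          + (((n:ℝ)+1)/((n:ℝ)+2)) * |(Leg n).coeff j|) := by
        refine Finset.sum_le_sum fun j _ => ?_
        rw [Leg_def2, coeff_sub, coeff_C_mul, coeff_C_mul]
        refine le_trans (abs_sub _ _) ?_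
        rw [abs_mul, abs_mul, abs_of_nonneg ha, abs_of_nonneg hb]
    _ = ((2*(n:ℝ)+3)/((n:ℝ)+2)) * AA (n+1) + (((n:ℝ)+1)/((n:ℝ)+2)) * AA n := by
        rw [Finset.sum_add_distrib, ← Finset.mul_sum, ← Finset.mul_sum, hS1, hS0]

lemma AA_bound : ∀ n : ℕ, AA n ≤ (1+Real.sqrt 2)^n / Real.sqrt ((n:ℝ)+1) := by
  have hr1 : 1 < Real.sqrt 2 := by
    rw [show (1:ℝ) = Real.sqrt 1 from (Real.sqrt_one).symm]
    exact Real.sqrt_lt_sqrt (by norm_num) (by norm_num)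
  have heta : (0:ℝ) < 1 + Real.sqrt 2 := by linarith
  have main : ∀ n : ℕ, AA n ≤ (1+Real.sqrt 2)^n / Real.sqrt ((n:ℝ)+1)
      ∧ AA (n+1) ≤ (1+Real.sqrt 2)^(n+1) / Real.sqrt (((n:ℝ)+1)+1) := by
    intro n
    induction n with
    | zero =>
      constructor
      · have : AA 0 = 1 := by simp [AA, Leg_def0]
        rw [this]
        rw [show ((0:ℕ):ℝ)+1 = 1 by norm_num, Real.sqrt_one]
        simp
      · have : AA 1 = 1 := by
          simp [AA, Leg_def1, Finset.sum_range_succ]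
        rw [this]
        have h2 : ((0:ℕ):ℝ)+1+1 = 2 := by norm_num
        rw [h2, le_div_iff₀ (Real.sqrt_pos.mpr (by norm_num : (0:ℝ) < 2))]
        have h3 : (0:ℝ) ≤ Real.sqrt 2 := Real.sqrt_nonneg 2
        rw [pow_one]
        nlinarith [hr1]
    | succ n ih =>
      refine ⟨by push_cast; exact ih.2, ?_⟩
      have h1 := AA_rec n
      have h2 : ((2*(n:ℝ)+3)/((n:ℝ)+2)) * AA (n+1) + (((n:ℝ)+1)/((n:ℝ)+2)) * AA n
          ≤ ((2*(n:ℝ)+3)/((n:ℝ)+2)) * ((1+Real.sqrt 2)^(n+1) / Real.sqrt (((n:ℝ)+1)+1))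
            + (((n:ℝ)+1)/((n:ℝ)+2)) * ((1+Real.sqrt 2)^n / Real.sqrt ((n:ℝ)+1)) := by
        have ha : (0:ℝ) ≤ (2*(n:ℝ)+3)/((n:ℝ)+2) := by positivity
        have hb : (0:ℝ) ≤ ((n:ℝ)+1)/((n:ℝ)+2) := by positivity
        exact add_le_add (mul_le_mul_of_nonneg_left ih.2 ha) (mul_le_mul_of_nonneg_left ih.1 hb)
      have h3 : ((2*(n:ℝ)+3)/((n:ℝ)+2)) * ((1+Real.sqrt 2)^(n+1) / Real.sqrt (((n:ℝ)+1)+1))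
            + (((n:ℝ)+1)/((n:ℝ)+2)) * ((1+Real.sqrt 2)^n / Real.sqrt ((n:ℝ)+1))
          ≤ (1+Real.sqrt 2)^(n+2) / Real.sqrt (((n:ℝ)+2)+1) := by
        have hk := key_ineq n
        have hpos : (0:ℝ) < (1+Real.sqrt 2)^n / ((n:ℝ)+2) := by positivity
        have := mul_le_mul_of_nonneg_left hk hpos.le
        calc ((2*(n:ℝ)+3)/((n:ℝ)+2)) * ((1+Real.sqrt 2)^(n+1) / Real.sqrt (((n:ℝ)+1)+1))
              + (((n:ℝ)+1)/((n:ℝ)+2)) * ((1+Real.sqrt 2)^n / Real.sqrt ((n:ℝ)+1))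
            = ((1+Real.sqrt 2)^n / ((n:ℝ)+2)) *
              ((2*(n:ℝ)+3)*(1+Real.sqrt 2)/Real.sqrt ((n:ℝ)+2) + ((n:ℝ)+1)/Real.sqrt ((n:ℝ)+1)) := by
              rw [show ((n:ℝ)+1)+1 = (n:ℝ)+2 by ring]
              ring
          _ ≤ ((1+Real.sqrt 2)^n / ((n:ℝ)+2)) * (((n:ℝ)+2)*(1+Real.sqrt 2)^2/Real.sqrt ((n:ℝ)+3)) := this
          _ = (1+Real.sqrt 2)^(n+2) / Real.sqrt (((n:ℝ)+2)+1) := by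
              rw [show ((n:ℝ)+2)+1 = (n:ℝ)+3 by ring]
              field_simp
              ring
      have : AA (n+2) ≤ (1+Real.sqrt 2)^(n+2) / Real.sqrt (((n:ℝ)+2)+1) := le_trans h1 (le_trans h2 h3)
      convert this using 3 <;> push_cast <;> ring
  exact fun n => (main n).1


lemma AA_def (n : ℕ) : AA n = ∑ j ∈ Finset.range (n+1), |(Leg n).coeff j| := rfl

lemma LL_mul_Leg (n k : ℕ) :
    LL (Leg n * Leg k) = ∑ l ∈ Finset.range (k+1), (Leg k).coeff l * Mo n l := by
  have h1 : Leg n * Leg k = ∑ l ∈ Finset.range (k+1), C ((Leg k).coeff l) * (Leg n * X^l) := by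
    conv_lhs => rw [(Leg k).as_sum_range' (k+1) (Nat.lt_succ_of_le (Leg_natDegree_le k))]
    rw [Finset.mul_sum]
    refine Finset.sum_congr rfl fun l _ => ?_
    rw [← C_mul_X_pow_eq_monomial]
    ring
  rw [h1, LL_sum]
  refine Finset.sum_congr rfl fun l _ => ?_
  rw [LL_Cmul, Mo_def']

lemma orth_lt (n k : ℕ) (h : k < n) : LL (Leg n * Leg k) = 0 := by
  rw [LL_mul_Leg]
  refine Finset.sum_eq_zero fun l hl => ?_
  rw [(Mo_eval n).1 l (by simp at hl; omega), mul_zero]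

lemma orth_diag (n : ℕ) : LL (Leg n * Leg n) = 2/(2*(n:ℝ)+1) := by
  rw [LL_mul_Leg, Finset.sum_range_succ]
  rw [Finset.sum_eq_zero (fun l hl => by
    rw [(Mo_eval n).1 l (by simp at hl; omega), mul_zero]), zero_add]
  have hMnn : Mo n n = Gm n 0 := by
    have := (Mo_eval n).2 0
    simpa using this
  rw [hMnn, Leg_coeff_self, lc_eq, Gm_zero]
  rw [show 2*n+1 = (2*n)+1 from rfl, Fsucc]
  push_cast
  have h1 : (Nat.factorial (2*n) : ℝ) ≠ 0 := by positivity
  have h2 : (Nat.factorial n : ℝ) ≠ 0 := by positivity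
  have h3 : (2*(n:ℝ)+1) ≠ 0 := by positivity
  field_simp
  ring


noncomputable def Bmat (m : ℕ) : Matrix (Fin m) (Fin m) ℝ :=
  fun n j => (Leg (n:ℕ)).coeff (j:ℕ)

lemma LL_expand (m : ℕ) (p q : Polynomial ℝ) (hp : p.natDegree < m) (hq : q.natDegree < m) :
    LL (p * q) = ∑ j : Fin m, ∑ l : Fin m, p.coeff j * q.coeff l * LL (X^((j:ℕ)+(l:ℕ))) := by
  have key : p * q = ∑ j ∈ Finset.range m, ∑ l ∈ Finset.range m,
      C (p.coeff j * q.coeff l) * X^(j+l) := by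
    conv_lhs => rw [p.as_sum_range' m hp, q.as_sum_range' m hq]
    rw [Finset.sum_mul_sum]
    refine Finset.sum_congr rfl fun j _ => Finset.sum_congr rfl fun l _ => ?_
    rw [← C_mul_X_pow_eq_monomial, ← C_mul_X_pow_eq_monomial, C_mul, pow_add]
    ring
  rw [key, LL_sum]
  rw [Fin.sum_univ_eq_sum_range
    (fun j => ∑ l : Fin m, p.coeff j * q.coeff l * LL (X^(j+(l:ℕ)))) m]
  refine Finset.sum_congr rfl fun j _ => ?_
  rw [LL_sum]
  rw [Fin.sum_univ_eq_sum_range (fun l => p.coeff j * q.coeff l * LL (X^(j+l))) m]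
  refine Finset.sum_congr rfl fun l _ => ?_
  rw [LL_Cmul]

lemma Smat_entry (m : ℕ) (j l : Fin m) : Smat m j l = LL (X^((j:ℕ)+(l:ℕ))) := by
  rw [LL_Xpow, Smat]
  push_cast
  rfl

lemma hBSB (m : ℕ) :
    Bmat m * Smat m * (Bmat m)ᵀ
      = Matrix.diagonal (fun n : Fin m => 2/(2*((n:ℕ):ℝ)+1)) := by
  ext n k
  have hexp := LL_expand m (Leg n) (Leg k)
    (lt_of_le_of_lt (Leg_natDegree_le n) n.isLt)
    (lt_of_le_of_lt (Leg_natDegree_le k) k.isLt)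
  have hLHS : (Bmat m * Smat m * (Bmat m)ᵀ) n k = LL (Leg (n:ℕ) * Leg (k:ℕ)) := by
    rw [hexp]
    simp only [Matrix.mul_apply, Matrix.transpose_apply, Finset.sum_mul]
    rw [Finset.sum_comm]
    refine Finset.sum_congr rfl fun j _ => Finset.sum_congr rfl fun l _ => ?_
    rw [Smat_entry, Bmat, Bmat]
    ring
  rw [hLHS]
  rcases lt_trichotomy (n:ℕ) (k:ℕ) with h | h | h
  · rw [mul_comm, orth_lt _ _ h, Matrix.diagonal_apply_ne _ (fun hc => by simp [hc] at h)]
  · have : n = k := Fin.ext h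
    subst this
    rw [orth_diag, Matrix.diagonal_apply_eq]
  · rw [orth_lt _ _ h, Matrix.diagonal_apply_ne _ (fun hc => by simp [hc] at h)]

lemma Bmat_triangular (m : ℕ) : (Bmat m).BlockTriangular OrderDual.toDual := by
  intro i j h
  exact coeff_eq_zero_of_natDegree_lt
    (lt_of_le_of_lt (Leg_natDegree_le i) (by exact_mod_cast h))

lemma Bmat_det_ne (m : ℕ) : (Bmat m).det ≠ 0 := by
  rw [Matrix.det_of_lowerTriangular _ (Bmat_triangular m)]
  exact Finset.prod_ne_zero_iff.mpr fun n _ => Leg_coeff_self_ne n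

lemma Smat_det_isUnit (m : ℕ) : IsUnit (Smat m).det := by
  have h := congrArg Matrix.det (hBSB m)
  rw [Matrix.det_mul, Matrix.det_mul, Matrix.det_transpose, Matrix.det_diagonal] at h
  have hD : ∏ n : Fin m, 2/(2*((n:ℕ):ℝ)+1) ≠ 0 :=
    Finset.prod_ne_zero_iff.mpr fun n _ => by positivity
  rw [isUnit_iff_ne_zero]
  intro hc
  rw [hc, mul_zero, zero_mul] at h
  exact hD h.symm

noncomputable def Emat (m : ℕ) : Matrix (Fin m) (Fin m) ℝ :=
  Matrix.diagonal (fun n : Fin m => (2*((n:ℕ):ℝ)+1)/2)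

lemma Smat_inv (m : ℕ) : (Smat m)⁻¹ = (Bmat m)ᵀ * Emat m * Bmat m := by
  refine Matrix.inv_eq_right_inv ?_
  have hDE : Matrix.diagonal (fun n : Fin m => 2/(2*((n:ℕ):ℝ)+1)) * Emat m = 1 := by
    rw [Emat, Matrix.diagonal_mul_diagonal]
    convert Matrix.diagonal_one
    rename_i n
    have : (2*((n:ℕ):ℝ)+1) ≠ 0 := by positivity
    field_simp
  have h1 : Bmat m * (Smat m * ((Bmat m)ᵀ * Emat m)) = 1 := by
    rw [← Matrix.mul_assoc, ← Matrix.mul_assoc, hBSB m, hDE]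
  have h2 := mul_eq_one_comm.mp h1
  calc Smat m * ((Bmat m)ᵀ * Emat m * Bmat m)
      = Smat m * ((Bmat m)ᵀ * Emat m) * Bmat m := by rw [← Matrix.mul_assoc]
    _ = 1 := h2

lemma trace_formula (m : ℕ) :
    Matrix.trace ((Bmat m)ᵀ * Emat m * Bmat m)
      = ∑ n : Fin m, ((2*((n:ℕ):ℝ)+1)/2) * ∑ j : Fin m, ((Leg (n:ℕ)).coeff (j:ℕ))^2 := by
  rw [Matrix.mul_assoc, Matrix.trace]
  simp only [Matrix.diag_apply, Matrix.mul_apply, Matrix.transpose_apply, Emat,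
    Matrix.diagonal_mul]
  rw [Finset.sum_comm]
  refine Finset.sum_congr rfl fun n _ => ?_
  rw [Finset.mul_sum]
  refine Finset.sum_congr rfl fun j _ => ?_
  rw [Finset.sum_eq_single_of_mem n (Finset.mem_univ n)
    (fun x _ hx => by rw [Matrix.diagonal_apply_ne _ (Ne.symm hx), zero_mul]),
    Matrix.diagonal_apply_eq]
  simp only [Bmat]
  ring


lemma abs_coeff_le (n j : ℕ) : |(Leg n).coeff j| ≤ AA n := by
  rcases le_or_gt j n with h | h
  · rw [AA_def]
    exact Finset.single_le_sum (f := fun i => |(Leg n).coeff i|)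
      (fun i _ => abs_nonneg _) (Finset.mem_range.mpr (by omega))
  · rw [Leg_coeff_zero n j h, abs_zero]
    exact AA_nonneg n

lemma sq_sum_le (m : ℕ) (n : Fin m) :
    ∑ j : Fin m, ((Leg (n:ℕ)).coeff (j:ℕ))^2 ≤ (AA (n:ℕ))^2 := by
  have hsum_abs : ∑ j : Fin m, |(Leg (n:ℕ)).coeff (j:ℕ)| = AA (n:ℕ) := by
    rw [Fin.sum_univ_eq_sum_range (fun j => |(Leg (n:ℕ)).coeff j|) m, AA_def]
    refine (Finset.sum_subset (Finset.range_subset_range.mpr n.isLt) fun x _ hx => ?_).symm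
    rw [Leg_coeff_zero (n:ℕ) x (by simp at hx; omega), abs_zero]
  calc ∑ j : Fin m, ((Leg (n:ℕ)).coeff (j:ℕ))^2
      ≤ ∑ j : Fin m, |(Leg (n:ℕ)).coeff (j:ℕ)| * AA (n:ℕ) := by
        refine Finset.sum_le_sum fun j _ => ?_
        rw [← sq_abs]
        rw [sq]
        exact mul_le_mul_of_nonneg_left (abs_coeff_le n j) (abs_nonneg _)
    _ = (AA (n:ℕ))^2 := by rw [← Finset.sum_mul, hsum_abs, sq]

lemma sq_sum_le' (m : ℕ) (n : Fin m) :
    ∑ j : Fin m, ((Leg (n:ℕ)).coeff (j:ℕ))^2 ≤ (1+Real.sqrt 2)^(2*(n:ℕ)) / (((n:ℕ):ℝ)+1) := by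
  refine le_trans (sq_sum_le m n) ?_
  have h1 : (AA (n:ℕ))^2 ≤ ((1+Real.sqrt 2)^(n:ℕ) / Real.sqrt (((n:ℕ):ℝ)+1))^2 :=
    pow_le_pow_left₀ (AA_nonneg _) (AA_bound _) 2
  refine le_trans h1 (le_of_eq ?_)
  rw [div_pow, Real.sq_sqrt (by positivity), ← pow_mul]
  ring_nf

lemma trace_le (m : ℕ) :
    (∑ n : Fin m, ((2*((n:ℕ):ℝ)+1)/2) * ∑ j : Fin m, ((Leg (n:ℕ)).coeff (j:ℕ))^2)
      ≤ ∑ n ∈ Finset.range m, (3+2*Real.sqrt 2)^n := by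
  rw [← Fin.sum_univ_eq_sum_range (fun n => (3+2*Real.sqrt 2)^n) m]
  refine Finset.sum_le_sum fun n _ => ?_
  have hs2 : (0:ℝ) ≤ Real.sqrt 2 := Real.sqrt_nonneg 2
  have hcoef : (0:ℝ) ≤ (2*((n:ℕ):ℝ)+1)/2 := by positivity
  have h1 := mul_le_mul_of_nonneg_left (sq_sum_le' m n) hcoef
  refine le_trans h1 ?_
  have h22 : Real.sqrt 2^2 = 2 := Real.sq_sqrt (by norm_num)
  have hpow : ((3:ℝ)+2*Real.sqrt 2)^(n:ℕ) = (1+Real.sqrt 2)^(2*(n:ℕ)) := by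
    rw [pow_mul]
    congr 1
    linear_combination (-1:ℝ) * h22
  rw [hpow]
  set Xp := (1+Real.sqrt 2)^(2*(n:ℕ)) with hXp
  have hXp0 : 0 ≤ Xp := by positivity
  have hn1 : (0:ℝ) < ((n:ℕ):ℝ)+1 := by positivity
  rw [div_mul_div_comm, div_le_iff₀ (by positivity)]
  nlinarith [hXp0, hn1]

lemma numeric (m : ℕ) (hm : 1000000 ≤ m) :
    1/(3+2*Real.sqrt 2-1)
      < ((2*Real.pi)^2)⁻¹ * (8/3 + 1/2 * Real.log ((2*(m:ℝ)-3)*(2*(m:ℝ)/3-1))) := by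
  have hm' : (1000000:ℝ) ≤ (m:ℝ) := by exact_mod_cast hm
  have hX1 : (1000000:ℝ) ≤ 2*(m:ℝ)-3 := by linarith
  have hX2 : (1:ℝ) ≤ 2*(m:ℝ)/3-1 := by linarith
  have hX : (163000:ℝ) ≤ (2*(m:ℝ)-3)*(2*(m:ℝ)/3-1) := by nlinarith
  have hXpos : (0:ℝ) < (2*(m:ℝ)-3)*(2*(m:ℝ)/3-1) := by nlinarith
  have hlog : (12:ℝ) ≤ Real.log ((2*(m:ℝ)-3)*(2*(m:ℝ)/3-1)) := by
    rw [Real.le_log_iff_exp_le hXpos]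
    have h1 : Real.exp (12:ℝ) = Real.exp 1 ^ (12:ℕ) := by
      rw [Real.exp_one_pow]
      norm_num
    have h2 : Real.exp 1 ^ (12:ℕ) ≤ (2.7182818286:ℝ)^(12:ℕ) :=
      pow_le_pow_left₀ (Real.exp_pos 1).le Real.exp_one_lt_d9.le 12
    have h3 : (2.7182818286:ℝ)^(12:ℕ) ≤ 163000 := by norm_num
    linarith [h1.le, h2, h3, hX, h1.ge]
  have hpi : Real.pi < 3.15 := Real.pi_lt_d2
  have hpi0 : 0 < Real.pi := Real.pi_pos
  have hs : (1.414:ℝ) < Real.sqrt 2 := Real.lt_sqrt_of_sq_lt (by norm_num)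
  have hinvpos : (0:ℝ) < ((2*Real.pi)^2)⁻¹ := by positivity
  have ha : (1:ℝ)/(3+2*Real.sqrt 2-1) < 0.2072 := by
    rw [div_lt_iff₀ (by nlinarith)]
    nlinarith
  have hb : (0.2183:ℝ) < ((2*Real.pi)^2)⁻¹ * (26/3) := by
    have h4 : (2*Real.pi)^2 < 39.69 := by nlinarith
    have h5 : (0:ℝ) < (2*Real.pi)^2 := by positivity
    rw [inv_mul_eq_div, lt_div_iff₀ h5]
    nlinarith
  have hc : ((2*Real.pi)^2)⁻¹ * (26/3)
      ≤ ((2*Real.pi)^2)⁻¹ * (8/3 + 1/2 * Real.log ((2*(m:ℝ)-3)*(2*(m:ℝ)/3-1))) :=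
    mul_le_mul_of_nonneg_left (by linarith) hinvpos.le
  linarith


end Stmt7Aux

open Stmt7Aux in
theorem stmt7 :
    (∀ m : ℕ, IsUnit (Smat m).det) ∧
    ∃ N : ℕ, ∀ m : ℕ, N ≤ m →
      Matrix.trace (Smat m)⁻¹ <
        ((2 * Real.pi) ^ 2)⁻¹ *
          (8 / 3 + 1 / 2 * Real.log ((2 * (m : ℝ) - 3) * (2 * (m : ℝ) / 3 - 1))) *
          (1 + Real.sqrt 2) ^ (2 * m) := by
  refine ⟨Smat_det_isUnit, 1000000, fun m hm => ?_⟩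
  have hs2 : (0:ℝ) ≤ Real.sqrt 2 := Real.sqrt_nonneg 2
  have hq1 : (3+2*Real.sqrt 2 : ℝ) ≠ 1 := by nlinarith
  have hq0 : (0:ℝ) < 3+2*Real.sqrt 2-1 := by nlinarith
  have h22 : Real.sqrt 2^2 = 2 := Real.sq_sqrt (by norm_num)
  have hpowq : ((3:ℝ)+2*Real.sqrt 2)^m = (1+Real.sqrt 2)^(2*m) := by
    rw [pow_mul]
    congr 1
    linear_combination (-1:ℝ) * h22
  calc Matrix.trace (Smat m)⁻¹
      = ∑ n : Fin m, ((2*((n:ℕ):ℝ)+1)/2) * ∑ j : Fin m, ((Leg (n:ℕ)).coeff (j:ℕ))^2 := by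
        rw [Smat_inv, trace_formula]
    _ ≤ ∑ n ∈ Finset.range m, (3+2*Real.sqrt 2)^n := trace_le m
    _ = ((3+2*Real.sqrt 2)^m - 1)/(3+2*Real.sqrt 2-1) := geom_sum_eq hq1 m
    _ < (3+2*Real.sqrt 2)^m/(3+2*Real.sqrt 2-1) := by
        have hpos : 0 < 1/(3+2*Real.sqrt 2-1) := by positivity
        rw [sub_div]
        linarith
    _ = (3+2*Real.sqrt 2)^m * (1/(3+2*Real.sqrt 2-1)) := by ring
    _ < (3+2*Real.sqrt 2)^m *
        (((2*Real.pi)^2)⁻¹ * (8/3 + 1/2 * Real.log ((2*(m:ℝ)-3)*(2*(m:ℝ)/3-1)))) :=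
        mul_lt_mul_of_pos_left (numeric m hm) (by positivity)
    _ = ((2 * Real.pi) ^ 2)⁻¹ *
          (8 / 3 + 1 / 2 * Real.log ((2 * (m : ℝ) - 3) * (2 * (m : ℝ) / 3 - 1))) *
          (1 + Real.sqrt 2) ^ (2 * m) := by
        rw [hpowq]; ring
end

section
/- Let ε₀ satisfy E(exp(t|ε₀|^ω)) < ∞ for some t > 0 and ω > 0. Define μ_a = 1 + E{|ε₀|^a 1(|ε₀|>1)} for a > 0. Then for any a, b ≥ 0 with a > 0 there is a constant C such that Σ_{ℓ=1}^L μ_{aℓ+b} ≤ (CL)^{aL/ω} for all L ≥ 1. -/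
/-!
Applying `u ≤ exp u` to `u = t y ^ ω / (c / ω)` gives
`y ^ c ≤ (c / (t ω)) ^ (c / ω) * exp (t y ^ ω)`, so with `M = E exp (t |ε₀| ^ ω)` every truncated
moment satisfies `μ_c ≤ (1 + M) * max 1 (c / (t ω)) ^ (c / ω)`. For `ℓ ≤ L` base and exponent are
at most those for `c = a L + b`, whence `Σ μ_{aℓ+b} ≤ L (1 + M) (K L) ^ ((a L + b) / ω)`; the
polynomial prefactor `L ^ (1 + b / ω)` is absorbed into a geometric factor
`E ^ L = (E ^ (ω / a)) ^ (a L / ω)`.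
-/

open MeasureTheory Real

lemma rpow_le_div_rpow_mul_exp {y s t : ℝ} (hy : 0 ≤ y) (hs : 0 < s) (ht : 0 < t) :
    y ^ s ≤ (s / t) ^ s * exp (t * y) := by
  have hscale : y = s / t * (t / s * y) := by field_simp
  calc y ^ s = (s / t) ^ s * (t / s * y) ^ s := by
        rw [← mul_rpow (by positivity) (by positivity), ← hscale]
    _ ≤ (s / t) ^ s * exp (t / s * y) ^ s := by
        gcongr
        linarith [add_one_le_exp (t / s * y)]
    _ = (s / t) ^ s * exp (t * y) := by
        rw [← exp_mul]; field_simp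

lemma rpow_le_mul_exp_rpow {y c ω t : ℝ} (hy : 0 ≤ y) (hc : 0 < c) (hω : 0 < ω) (ht : 0 < t) :
    y ^ c ≤ (c / (t * ω)) ^ (c / ω) * exp (t * y ^ ω) := by
  have h := rpow_le_div_rpow_mul_exp (rpow_nonneg hy ω) (div_pos hc hω) ht
  rwa [← rpow_mul hy, mul_div_cancel₀ c hω.ne', div_div, mul_comm ω t] at h

lemma one_add_integral_truncated_rpow_le {Ω : Type*} [MeasurableSpace Ω] {μ : Measure Ω}
    {f : Ω → ℝ} {c ω t : ℝ} (hc : 0 < c) (hω : 0 < ω) (ht : 0 < t)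
    (hexp : Integrable (fun x => exp (t * |f x| ^ ω)) μ) :
    1 + ∫ x, (if 1 < |f x| then |f x| ^ c else 0) ∂μ
      ≤ (1 + ∫ x, exp (t * |f x| ^ ω) ∂μ) * max 1 (c / (t * ω)) ^ (c / ω) := by
  set M := ∫ x, exp (t * |f x| ^ ω) ∂μ
  have hM : 0 ≤ M := integral_nonneg fun x => (exp_pos _).le
  have hK : (c / (t * ω)) ^ (c / ω) ≤ max 1 (c / (t * ω)) ^ (c / ω) := by
    gcongr; exact le_max_right _ _
  have hK1 : 1 ≤ max 1 (c / (t * ω)) ^ (c / ω) :=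
    one_le_rpow (le_max_left _ _) (by positivity)
  have hint : ∫ x, (if 1 < |f x| then |f x| ^ c else 0) ∂μ ≤ (c / (t * ω)) ^ (c / ω) * M := by
    rw [← integral_const_mul]
    refine integral_mono_of_nonneg (.of_forall fun x => by positivity) (hexp.const_mul _)
      (.of_forall fun x => ?_)
    dsimp only
    split_ifs
    · exact rpow_le_mul_exp_rpow (abs_nonneg _) hc hω ht
    · positivity
  nlinarith [mul_le_mul_of_nonneg_right hK hM]

lemma max_one_div_rpow_le {a b t ω x y : ℝ} (ha : 0 ≤ a) (hb : 0 ≤ b) (ht : 0 < t)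
    (hω : 0 < ω) (hx : 1 ≤ x) (hxy : x ≤ y) :
    max 1 ((a * x + b) / (t * ω)) ^ ((a * x + b) / ω)
      ≤ (max 1 ((a + b) / (t * ω)) * y) ^ ((a * y + b) / ω) := by
  have hy : 1 ≤ max 1 ((a + b) / (t * ω)) * y :=
    one_le_mul_of_one_le_of_one_le (le_max_left _ _) (hx.trans hxy)
  have hbase : max 1 ((a * x + b) / (t * ω)) ≤ max 1 ((a + b) / (t * ω)) * y := by
    refine max_le hy ?_
    calc (a * x + b) / (t * ω) ≤ (a + b) / (t * ω) * y := by
          rw [div_mul_eq_mul_div]; gcongr; nlinarith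
      _ ≤ max 1 ((a + b) / (t * ω)) * y :=
          mul_le_mul_of_nonneg_right (le_max_right _ _) (by linarith)
  calc max 1 ((a * x + b) / (t * ω)) ^ ((a * x + b) / ω)
      ≤ (max 1 ((a + b) / (t * ω)) * y) ^ ((a * x + b) / ω) := by gcongr
    _ ≤ (max 1 ((a + b) / (t * ω)) * y) ^ ((a * y + b) / ω) := by gcongr

lemma mul_rpow_le_mul_exp_rpow {A p x : ℝ} (hA : 1 ≤ A) (hp : 0 ≤ p) (hx : 1 ≤ x) :
    A * x ^ p ≤ (A * exp p) ^ x := by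
  have hx' : x ^ p ≤ exp p ^ x := by
    calc x ^ p ≤ exp x ^ p := by gcongr; linarith [add_one_le_exp x]
      _ = exp p ^ x := by rw [← exp_mul, ← exp_mul, mul_comm]
  rw [mul_rpow (by linarith) (exp_pos p).le]
  exact mul_le_mul (self_le_rpow_of_one_le hA hx) hx' (by positivity) (by positivity)

lemma mul_mul_rpow_le_rpow {a b ω B K x : ℝ} (ha : 0 < a) (hb : 0 ≤ b) (hω : 0 < ω)
    (hB : 1 ≤ B) (hK : 1 ≤ K) (hx : 1 ≤ x) :
    x * (B * (K * x) ^ ((a * x + b) / ω))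
      ≤ (K * (B * K ^ (b / ω) * exp (1 + b / ω)) ^ (ω / a) * x) ^ (a * x / ω) := by
  set A := B * K ^ (b / ω)
  have hA : 1 ≤ A := one_le_mul_of_one_le_of_one_le hB (one_le_rpow hK (by positivity))
  have hx0 : 0 < x := by linarith
  have hK0 : 0 < K := by linarith
  have hlhs : x * (B * (K * x) ^ ((a * x + b) / ω))
      = A * x ^ (1 + b / ω) * (K * x) ^ (a * x / ω) := by
    rw [add_div, rpow_add (by positivity), mul_rpow (z := b / ω) hK0.le hx0.le, rpow_add hx0,
      rpow_one]
    ring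
  have hrhs : (K * (A * exp (1 + b / ω)) ^ (ω / a) * x) ^ (a * x / ω)
      = (A * exp (1 + b / ω)) ^ x * (K * x) ^ (a * x / ω) := by
    set E := A * exp (1 + b / ω)
    have hE : 0 < E := by positivity
    rw [show K * E ^ (ω / a) * x = E ^ (ω / a) * (K * x) by ring,
      mul_rpow (by positivity) (by positivity), ← rpow_mul hE.le]
    congr 2
    field_simp
  rw [hlhs, hrhs]
  gcongr
  exact mul_rpow_le_mul_exp_rpow hA (by positivity) hx

open MeasureTheory ProbabilityTheory in
theorem stmt9_general {Ω : Type*} [MeasureSpace Ω]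
    (ε : Ω → ℝ)
    (ω t : ℝ) (hω : 0 < ω) (ht : 0 < t)
    (hexp : Integrable fun x => Real.exp (t * |ε x| ^ ω))
    (a b : ℝ) (ha : 0 < a) (hb : 0 ≤ b)
    (μa : ℝ → ℝ)
    (hμ : ∀ c : ℝ, μa c = 1 + ∫ x, (if 1 < |ε x| then |ε x| ^ c else 0)) :
    ∃ C : ℝ, 0 < C ∧ ∀ L : ℕ, 1 ≤ L →
      ∑ ℓ ∈ Finset.Icc 1 L, μa (a * ℓ + b) ≤ (C * L) ^ (a * L / ω) := by
  set M := ∫ x, exp (t * |ε x| ^ ω)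
  have hM : 0 ≤ M := integral_nonneg fun x => (exp_pos _).le
  set K := max 1 ((a + b) / (t * ω))
  have hK : 1 ≤ K := le_max_left _ _
  refine ⟨K * ((1 + M) * K ^ (b / ω) * exp (1 + b / ω)) ^ (ω / a), by positivity,
    fun L hL => ?_⟩
  have hL1 : (1 : ℝ) ≤ L := by exact_mod_cast hL
  have hterm : ∀ ℓ ∈ Finset.Icc 1 L,
      μa (a * ℓ + b) ≤ (1 + M) * (K * L) ^ ((a * L + b) / ω) := by
    intro ℓ hℓ
    obtain ⟨hℓ1, hℓL⟩ := Finset.mem_Icc.1 hℓ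
    rw [hμ]
    refine (one_add_integral_truncated_rpow_le (by positivity) hω ht hexp).trans ?_
    gcongr (1 + M) * ?_
    exact max_one_div_rpow_le ha.le hb ht hω (by exact_mod_cast hℓ1) (by exact_mod_cast hℓL)
  calc ∑ ℓ ∈ Finset.Icc 1 L, μa (a * ℓ + b)
      ≤ L * ((1 + M) * (K * L) ^ ((a * L + b) / ω)) := by
        simpa using Finset.sum_le_card_nsmul _ _ _ hterm
    _ ≤ _ := mul_mul_rpow_le_rpow ha hb hω (by linarith) hK hL1

open MeasureTheory ProbabilityTheory in
theorem stmt9 {Ω : Type*} [MeasureSpace Ω] [IsProbabilityMeasure (ℙ : Measure Ω)]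
    (ε : Ω → ℝ) (hmeas : Measurable ε)
    (ω t : ℝ) (hω : 0 < ω) (ht : 0 < t)
    (hexp : Integrable fun x => Real.exp (t * |ε x| ^ ω))
    (a b : ℝ) (ha : 0 < a) (hb : 0 ≤ b)
    (μa : ℝ → ℝ)
    (hμ : ∀ c : ℝ, μa c = 1 + ∫ x, (if 1 < |ε x| then |ε x| ^ c else 0)) :
    ∃ C : ℝ, 0 < C ∧ ∀ L : ℕ, 1 ≤ L →
      ∑ ℓ ∈ Finset.Icc 1 L, μa (a * ℓ + b) ≤ (C * L) ^ (a * L / ω) :=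
  stmt9_general ε ω t hω ht hexp a b ha hb μa hμ
end

section
/- Let α_j have property P_0(-d) (i.e., |α_j| ≤ C(j+1)^{-d-1}, |α_j - α_{j+1}| ≤ C(j+1)^{-d-2}) and β_j have property P_0(e), with |d| < 1, |e| < 1, and assume Σ|α_j| < ∞ if d = 0, Σ|β_j| < ∞ if e = 0, and Σ β_j = 0 if e < 0. Then for all j > 0, t > 0: |Σ_{k=0}^j α_{k+t} β_{j-k}| ≤ C j^e t^{-d-1} when j ≤ t, and ≤ C j^{e-1} max(j^{-d}, t^{-d}) when j > t. -/
/-!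
Write the sum as the convolution `∑_{k + r = j} α (k + t) β r`. For `j ≤ t` every index of
`α` is at least `t`, so there `α` and its differences are `O(t^(-d-1))` and `O(t^(-d-2))`.
For `t < j` split at `k = j / 2`: for small `k`, `β (j - k) = O(j^(e-1))` while
`∑ |α (k + t)| = O(max (j^(-d)) (t^(-d)))`; for small `r` all indices of `α` are at least
`j / 2`. In both regimes what remains is a bound `O((A + n D) n^e)` on `∑_{r < n} a r β r`
when `|a r| ≤ A` and `|a r - a (r + 1)| ≤ D`. For `e ≥ 0` this is `∑_{r < n} |β r| = O(n^e)`;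
for `e < 0` sum by parts, the partial sums of `β` being minus its tails, which are `O(n^e)`.
Sums of powers are compared with integrals throughout.
-/

open Finset Real

lemma rpow_le_two_rpow_abs_mul_rpow {x y : ℝ} (hx : 0 < x) (hy : 0 < y) (hxy : x ≤ 2 * y)
    (hyx : y ≤ 2 * x) (p : ℝ) : x ^ p ≤ 2 ^ |p| * y ^ p := by
  rcases le_total 0 p with hp | hp
  · calc x ^ p ≤ (2 * y) ^ p := rpow_le_rpow hx.le hxy hp
      _ = 2 ^ |p| * y ^ p := by rw [mul_rpow zero_le_two hy.le, abs_of_nonneg hp]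
  · calc x ^ p ≤ (y / 2) ^ p := rpow_le_rpow_of_nonpos (by positivity) (by linarith) hp
      _ = 2 ^ |p| * y ^ p := by
        rw [div_rpow hy.le zero_le_two, abs_of_nonpos hp, rpow_neg zero_le_two, div_eq_inv_mul]

lemma sum_range_add_rpow_le_integral {p x : ℝ} (hp : p ≤ 0) (hx : 0 < x) (N : ℕ) :
    ∑ i ∈ range N, (x + (i + 1 : ℕ)) ^ p ≤ ∫ y in x..x + N, y ^ p :=
  AntitoneOn.sum_le_integral fun _ hu _ _ huv => rpow_le_rpow_of_nonpos (hx.trans_le hu.1) huv hp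

lemma sum_range_add_rpow_le {p x : ℝ} (hp : p < -1) (hx : 0 < x) (N : ℕ) :
    ∑ i ∈ range N, (x + (i + 1 : ℕ)) ^ p ≤ x ^ (p + 1) / -(p + 1) := by
  have hxN : x ≤ x + N := by simp
  refine (sum_range_add_rpow_le_integral (by linarith) hx N).trans ?_
  rw [integral_rpow (Or.inr ⟨by linarith, fun h => ?_⟩), ← neg_div_neg_eq, neg_sub]
  · gcongr
    · linarith
    · exact sub_le_self _ (rpow_nonneg (hx.le.trans hxN) _)
  · rw [Set.uIcc_of_le hxN] at h
    exact hx.not_ge h.1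

lemma sum_range_add_one_rpow_le {p : ℝ} (hp1 : -1 < p) (hp0 : p ≤ 0) (n : ℕ) :
    ∑ k ∈ range n, ((k : ℝ) + 1) ^ p ≤ (1 + 1 / (p + 1)) * (n : ℝ) ^ (p + 1) := by
  have hq : 0 < p + 1 := by linarith
  cases n with
  | zero => simp [zero_rpow hq.ne']
  | succ n =>
    have hint := sum_range_add_rpow_le_integral hp0 one_pos n
    rw [integral_rpow (Or.inl hp1), one_rpow] at hint
    have hn : 1 ≤ ((n + 1 : ℕ) : ℝ) ^ (p + 1) := one_le_rpow (by simp) hq.le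
    rw [sum_range_succ', Nat.cast_zero, zero_add, one_rpow]
    calc ∑ k ∈ range n, (((k + 1 : ℕ) : ℝ) + 1) ^ p + 1
        ≤ (((n + 1 : ℕ) : ℝ) ^ (p + 1) - 1) / (p + 1) + 1 := by
          push_cast at hint ⊢
          simp_rw [add_comm _ (1 : ℝ)] at hint ⊢
          linarith
      _ ≤ _ := by
          rw [add_mul, one_mul, div_mul_eq_mul_div, one_mul, add_comm]
          gcongr; linarith

lemma abs_sum_mul_le_mul_sum_abs {s : Finset ℕ} {f g : ℕ → ℝ} {A : ℝ}
    (hf : ∀ i ∈ s, |f i| ≤ A) : |∑ i ∈ s, f i * g i| ≤ A * ∑ i ∈ s, |g i| := by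
  rw [mul_sum]
  refine (abs_sum_le_sum_abs _ _).trans (sum_le_sum fun i hi => ?_)
  rw [abs_mul]
  exact mul_le_mul_of_nonneg_right (hf i hi) (abs_nonneg _)

lemma sum_range_succ_sub_eq_add {M : Type*} [AddCommMonoid M] (f : ℕ → ℕ → M) {j h : ℕ}
    (hh : h ≤ j + 1) :
    ∑ k ∈ range (j + 1), f k (j - k)
      = ∑ k ∈ range h, f k (j - k) + ∑ r ∈ range (j + 1 - h), f (j - r) r := by
  rw [← sum_range_add_sum_Ico _ hh, sum_Ico_eq_sum_range,
    ← sum_range_reflect (fun r => f (j - r) r)]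
  congr 1
  refine sum_congr rfl fun r hr => ?_
  rw [mem_range] at hr
  congr 1 <;> omega

section

variable {α β : ℕ → ℝ} {C d e : ℝ}

lemma sum_range_abs_le_of_pos (he0 : 0 < e) (he1 : e ≤ 1) (hC : 0 ≤ C)
    (hβ : ∀ j : ℕ, |β j| ≤ C * ((j : ℝ) + 1) ^ (e - 1)) (n : ℕ) :
    ∑ r ∈ range n, |β r| ≤ C * (1 + 1 / e) * (n : ℝ) ^ e := by
  have h := sum_range_add_one_rpow_le (p := e - 1) (by linarith) (by linarith) n
  rw [sub_add_cancel] at h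
  calc ∑ r ∈ range n, |β r| ≤ C * ∑ r ∈ range n, ((r : ℝ) + 1) ^ (e - 1) := by
        rw [mul_sum]; exact sum_le_sum fun r _ => hβ r
    _ ≤ _ := by rw [mul_assoc]; gcongr

lemma abs_sum_range_le_of_hasSum_zero (he : e < 0) (hC : 0 ≤ C)
    (hβ : ∀ j : ℕ, |β j| ≤ C * ((j : ℝ) + 1) ^ (e - 1)) (hβ0 : HasSum β 0) {n : ℕ}
    (hn : 0 < n) :
    |∑ m ∈ range n, β m| ≤ C / -e * (n : ℝ) ^ e := by
  have htail : HasSum (fun i => β (i + n)) (-∑ m ∈ range n, β m) := by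
    simpa using (hasSum_nat_add_iff' n).mpr hβ0
  rw [← abs_neg]
  refine le_of_tendsto' htail.tendsto_sum_nat.abs fun N => ?_
  have h := sum_range_add_rpow_le (p := e - 1) (by linarith) (Nat.cast_pos.mpr hn) N
  rw [sub_add_cancel] at h
  calc |∑ i ∈ range N, β (i + n)|
      ≤ C * ∑ i ∈ range N, ((n : ℝ) + (i + 1 : ℕ)) ^ (e - 1) := by
        rw [mul_sum]
        refine (abs_sum_le_sum_abs _ _).trans (sum_le_sum fun i _ => (hβ _).trans_eq ?_)
        push_cast; ring_nf
    _ ≤ C * ((n : ℝ) ^ e / -e) := by gcongr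
    _ = C / -e * (n : ℝ) ^ e := by ring

lemma abs_sum_mul_le_of_hasSum_zero (he1 : -1 < e) (he : e < 0) (hC : 0 ≤ C)
    (hβ : ∀ j : ℕ, |β j| ≤ C * ((j : ℝ) + 1) ^ (e - 1)) (hβ0 : HasSum β 0)
    {a : ℕ → ℝ} {A D : ℝ} {n : ℕ} (hn : 0 < n) (ha : ∀ r < n, |a r| ≤ A)
    (hΔa : ∀ r < n, |a r - a (r + 1)| ≤ D) :
    |∑ r ∈ range n, a r * β r| ≤ C / -e * (1 + 1 / (e + 1)) * (A + n * D) * (n : ℝ) ^ e := by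
  set B := C / -e
  have hB : 0 ≤ B := div_nonneg hC (by linarith)
  have hA : 0 ≤ A := (abs_nonneg _).trans (ha 0 hn)
  have hD : 0 ≤ D := (abs_nonneg _).trans (hΔa 0 hn)
  have hpart : ∀ m, 0 < m → |∑ i ∈ range m, β i| ≤ B * (m : ℝ) ^ e :=
    fun m hm => abs_sum_range_le_of_hasSum_zero he hC hβ hβ0 hm
  have hlast : |a (n - 1) * ∑ i ∈ range n, β i| ≤ A * (B * (n : ℝ) ^ e) := by
    rw [abs_mul]
    exact mul_le_mul (ha _ (by omega)) (hpart n hn) (abs_nonneg _) hA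
  have hdiff : |∑ i ∈ range (n - 1), (a (i + 1) - a i) * ∑ m ∈ range (i + 1), β m|
      ≤ D * (B * ((1 + 1 / (e + 1)) * (n : ℝ) ^ (e + 1))) := by
    calc _ ≤ ∑ i ∈ range (n - 1), D * (B * ((i + 1 : ℕ) : ℝ) ^ e) := by
          refine (abs_sum_le_sum_abs _ _).trans (sum_le_sum fun i hi => ?_)
          rw [abs_mul, abs_sub_comm]
          exact mul_le_mul (hΔa i (by simp at hi; omega)) (hpart _ i.succ_pos)
            (abs_nonneg _) hD
      _ ≤ ∑ i ∈ range n, D * (B * ((i : ℝ) + 1) ^ e) := by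
          push_cast
          exact sum_le_sum_of_subset_of_nonneg (range_mono (by omega))
            fun _ _ _ => by positivity
      _ ≤ _ := by
          rw [← mul_sum, ← mul_sum]
          gcongr
          exact sum_range_add_one_rpow_le he1 he.le n
  have hparts := sum_range_by_parts a β n
  simp only [smul_eq_mul] at hparts
  rw [hparts]
  have hn' : (n : ℝ) ^ (e + 1) = n * (n : ℝ) ^ e := by
    rw [rpow_add_one (by positivity), mul_comm]
  have hc : 1 ≤ 1 + 1 / (e + 1) :=
    le_add_of_nonneg_right (div_nonneg zero_le_one (by linarith))
  calc _ ≤ A * (B * (n : ℝ) ^ e) + D * (B * ((1 + 1 / (e + 1)) * (n : ℝ) ^ (e + 1))) :=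
        (abs_sub _ _).trans (add_le_add hlast hdiff)
    _ = B * (n : ℝ) ^ e * (A + (1 + 1 / (e + 1)) * (n * D)) := by rw [hn']; ring
    _ ≤ B * (n : ℝ) ^ e * ((1 + 1 / (e + 1)) * (A + n * D)) := by
        gcongr; nlinarith
    _ = _ := by ring

lemma exists_abs_sum_mul_le (he : |e| < 1) (hC : 0 ≤ C)
    (hβ : ∀ j : ℕ, |β j| ≤ C * ((j : ℝ) + 1) ^ (e - 1))
    (he0 : e = 0 → Summable fun j : ℕ => |β j|) (hen : e < 0 → HasSum β 0) :
    ∃ K, 0 ≤ K ∧ ∀ (a : ℕ → ℝ) (A D : ℝ) (n : ℕ), 0 < n → (∀ r < n, |a r| ≤ A) →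
      (∀ r < n, |a r - a (r + 1)| ≤ D) →
      |∑ r ∈ range n, a r * β r| ≤ K * (A + n * D) * (n : ℝ) ^ e := by
  obtain ⟨he1, he2⟩ := abs_lt.mp he
  rcases lt_trichotomy e 0 with he | rfl | he
  · exact ⟨_, mul_nonneg (div_nonneg hC (by linarith)) (by
      have : 0 < e + 1 := by linarith
      positivity), fun a A D n hn ha hΔa =>
      abs_sum_mul_le_of_hasSum_zero he1 he hC hβ (hen he) hn ha hΔa⟩
  · refine ⟨∑' j, |β j|, tsum_nonneg fun _ => abs_nonneg _, fun a A D n hn ha hΔa => ?_⟩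
    have hA : 0 ≤ A := (abs_nonneg _).trans (ha 0 hn)
    have hD : 0 ≤ D := (abs_nonneg _).trans (hΔa 0 hn)
    calc _ ≤ A * ∑ r ∈ range n, |β r| :=
          abs_sum_mul_le_mul_sum_abs fun r hr => ha r (by simpa using hr)
      _ ≤ A * ∑' j, |β j| := by
          gcongr
          exact (he0 rfl).sum_le_tsum _ fun _ _ => abs_nonneg _
      _ ≤ _ := by
          rw [rpow_zero, mul_one, mul_comm]
          gcongr; exact le_add_of_nonneg_right (by positivity)
  · refine ⟨C * (1 + 1 / e), by positivity, fun a A D n hn ha hΔa => ?_⟩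
    have hA : 0 ≤ A := (abs_nonneg _).trans (ha 0 hn)
    have hD : 0 ≤ D := (abs_nonneg _).trans (hΔa 0 hn)
    calc _ ≤ A * ∑ r ∈ range n, |β r| :=
          abs_sum_mul_le_mul_sum_abs fun r hr => ha r (by simpa using hr)
      _ ≤ A * (C * (1 + 1 / e) * (n : ℝ) ^ e) := by
          gcongr; exact sum_range_abs_le_of_pos he he2.le hC hβ n
      _ = C * (1 + 1 / e) * A * (n : ℝ) ^ e := by ring
      _ ≤ _ := by gcongr; exact le_add_of_nonneg_right (by positivity)

lemma exists_abs_sum_sub_mul_le (hd : -1 ≤ d) (he : |e| < 1)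
    (hC : 0 ≤ C) (hα1 : ∀ j : ℕ, |α j| ≤ C * ((j : ℝ) + 1) ^ (-d - 1))
    (hα2 : ∀ j : ℕ, |α j - α (j + 1)| ≤ C * ((j : ℝ) + 1) ^ (-d - 2))
    (hβ : ∀ j : ℕ, |β j| ≤ C * ((j : ℝ) + 1) ^ (e - 1))
    (he0 : e = 0 → Summable fun j : ℕ => |β j|) (hen : e < 0 → HasSum β 0) :
    ∃ K, 0 ≤ K ∧ ∀ s n x : ℕ, 0 < n → 0 < x → x + n ≤ s + 1 →
      |∑ r ∈ range n, α (s - r) * β r|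
        ≤ K * ((x : ℝ) ^ (-d - 1) + n * (x : ℝ) ^ (-d - 2)) * (n : ℝ) ^ e := by
  obtain ⟨K, hK, hsum⟩ := exists_abs_sum_mul_le he hC hβ he0 hen
  refine ⟨K * C, by positivity, fun s n x hn hx hxs => ?_⟩
  have hx' : (0 : ℝ) < x := Nat.cast_pos.mpr hx
  have hle : ∀ r < n, (x : ℝ) ≤ (s - (r + 1) : ℕ) + 1 := fun r hr => by
    rw [← Nat.cast_add_one, Nat.cast_le]; omega
  have ha : ∀ r < n, |α (s - r)| ≤ C * (x : ℝ) ^ (-d - 1) := fun r hr => by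
    refine (hα1 _).trans (mul_le_mul_of_nonneg_left
      (rpow_le_rpow_of_nonpos hx' ((hle r hr).trans ?_) (by linarith)) hC)
    gcongr; omega
  have hΔa : ∀ r < n, |α (s - r) - α (s - (r + 1))| ≤ C * (x : ℝ) ^ (-d - 2) := fun r hr => by
    rw [show s - r = s - (r + 1) + 1 by omega, abs_sub_comm]
    exact (hα2 _).trans (mul_le_mul_of_nonneg_left
      (rpow_le_rpow_of_nonpos hx' (hle r hr) (by linarith)) hC)
  calc _ ≤ K * (C * (x : ℝ) ^ (-d - 1) + n * (C * (x : ℝ) ^ (-d - 2))) * (n : ℝ) ^ e :=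
        hsum (fun r => α (s - r)) _ _ n hn ha hΔa
    _ = _ := by ring

lemma exists_sum_range_abs_add_le (hd : -1 < d) (hC : 0 ≤ C)
    (hα : ∀ j : ℕ, |α j| ≤ C * ((j : ℝ) + 1) ^ (-d - 1))
    (hd0 : d = 0 → Summable fun j : ℕ => |α j|) :
    ∃ K, 0 ≤ K ∧ ∀ t m N : ℕ, 0 < t → m ≤ N →
      ∑ k ∈ range m, |α (k + t)| ≤ K * max ((N : ℝ) ^ (-d)) ((t : ℝ) ^ (-d)) := by
  rcases lt_trichotomy d 0 with hd' | rfl | hd'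
  · have hnd : 0 < -d := by linarith
    refine ⟨C * (1 + 1 / -d), by positivity, fun t m N ht hmN => ?_⟩
    have h := sum_range_add_one_rpow_le (p := -d - 1) (by linarith) (by linarith) m
    rw [sub_add_cancel] at h
    calc ∑ k ∈ range m, |α (k + t)| ≤ C * ∑ k ∈ range m, ((k : ℝ) + 1) ^ (-d - 1) := by
          rw [mul_sum]
          refine sum_le_sum fun k _ => (hα _).trans (mul_le_mul_of_nonneg_left
            (rpow_le_rpow_of_nonpos (by positivity) (by simp) (by linarith)) hC)
      _ ≤ C * ((1 + 1 / -d) * (N : ℝ) ^ (-d)) := by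
          gcongr
          exact h.trans (by gcongr)
      _ ≤ _ := by rw [← mul_assoc]; gcongr; exact le_max_left _ _
  · refine ⟨∑' j, |α j|, tsum_nonneg fun _ => abs_nonneg _, fun t m N ht hmN => ?_⟩
    simp only [neg_zero, rpow_zero, max_self, mul_one]
    calc ∑ k ∈ range m, |α (k + t)| ≤ ∑ k ∈ range (t + m), |α k| := by
          rw [sum_range_add]
          simp_rw [add_comm _ t]
          exact le_add_of_nonneg_left (sum_nonneg fun _ _ => abs_nonneg _)
      _ ≤ _ := (hd0 rfl).sum_le_tsum _ fun _ _ => abs_nonneg _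
  · refine ⟨C / d, by positivity, fun t m N ht hmN => ?_⟩
    have h := sum_range_add_rpow_le (p := -d - 1) (by linarith) (Nat.cast_pos.mpr ht) m
    rw [sub_add_cancel, neg_neg] at h
    calc ∑ k ∈ range m, |α (k + t)|
        ≤ C * ∑ k ∈ range m, ((t : ℝ) + (k + 1 : ℕ)) ^ (-d - 1) := by
          rw [mul_sum]
          refine sum_le_sum fun k _ => (hα _).trans_eq ?_
          push_cast; ring_nf
      _ ≤ C * ((t : ℝ) ^ (-d) / d) := by gcongr
      _ ≤ _ := by rw [mul_div_assoc', div_mul_eq_mul_div]; gcongr; exact le_max_right _ _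

lemma exists_abs_sum_le_of_le (hd : -1 ≤ d) (he : |e| < 1) (hC : 0 ≤ C)
    (hα1 : ∀ j : ℕ, |α j| ≤ C * ((j : ℝ) + 1) ^ (-d - 1))
    (hα2 : ∀ j : ℕ, |α j - α (j + 1)| ≤ C * ((j : ℝ) + 1) ^ (-d - 2))
    (hβ : ∀ j : ℕ, |β j| ≤ C * ((j : ℝ) + 1) ^ (e - 1))
    (he0 : e = 0 → Summable fun j : ℕ => |β j|) (hen : e < 0 → HasSum β 0) :
    ∃ K, 0 ≤ K ∧ ∀ j t : ℕ, 0 < j → j ≤ t →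
      |∑ k ∈ range (j + 1), α (k + t) * β (j - k)| ≤ K * (j : ℝ) ^ e * (t : ℝ) ^ (-d - 1) := by
  obtain ⟨K, hK, hw⟩ := exists_abs_sum_sub_mul_le hd he hC hα1 hα2 hβ he0 hen
  refine ⟨K * 3 * 2 ^ |e|, by positivity, fun j t hj hjt => ?_⟩
  have hj1 : (1 : ℝ) ≤ j := Nat.one_le_cast.mpr hj
  have hjt' : (j : ℝ) ≤ t := Nat.cast_le.mpr hjt
  have hrefl : ∑ k ∈ range (j + 1), α (k + t) * β (j - k)
      = ∑ r ∈ range (j + 1), α (j + t - r) * β r := by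
    rw [← sum_range_reflect]
    refine sum_congr rfl fun r hr => ?_
    rw [mem_range] at hr
    congr 2 <;> omega
  have hmid : (t : ℝ) ^ (-d - 1) + ((j + 1 : ℕ) : ℝ) * (t : ℝ) ^ (-d - 2)
      ≤ 3 * (t : ℝ) ^ (-d - 1) := by
    have ht_pow : (t : ℝ) ^ (-d - 1) = (t : ℝ) ^ (-d - 2) * t := by
      rw [← rpow_add_one (by linarith)]; ring_nf
    have hjt_mul : ((j : ℝ) + 1) * (t : ℝ) ^ (-d - 2) ≤ 2 * t * (t : ℝ) ^ (-d - 2) := by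
      gcongr; linarith
    push_cast; linarith
  have hend : ((j + 1 : ℕ) : ℝ) ^ e ≤ 2 ^ |e| * (j : ℝ) ^ e :=
    rpow_le_two_rpow_abs_mul_rpow (by positivity) (by positivity) (by push_cast; linarith)
      (by push_cast; linarith) e
  rw [hrefl]
  calc _ ≤ K * ((t : ℝ) ^ (-d - 1) + ((j + 1 : ℕ) : ℝ) * (t : ℝ) ^ (-d - 2))
          * ((j + 1 : ℕ) : ℝ) ^ e := hw _ _ _ j.succ_pos (hj.trans_le hjt) (by omega)
    _ ≤ K * (3 * (t : ℝ) ^ (-d - 1)) * (2 ^ |e| * (j : ℝ) ^ e) := by gcongr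
    _ = _ := by ring

lemma exists_abs_sum_le_of_lt (hd : -1 < d) (he : |e| < 1) (hC : 0 ≤ C)
    (hα1 : ∀ j : ℕ, |α j| ≤ C * ((j : ℝ) + 1) ^ (-d - 1))
    (hα2 : ∀ j : ℕ, |α j - α (j + 1)| ≤ C * ((j : ℝ) + 1) ^ (-d - 2))
    (hβ : ∀ j : ℕ, |β j| ≤ C * ((j : ℝ) + 1) ^ (e - 1))
    (hd0 : d = 0 → Summable fun j : ℕ => |α j|)
    (he0 : e = 0 → Summable fun j : ℕ => |β j|) (hen : e < 0 → HasSum β 0) :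
    ∃ K, 0 ≤ K ∧ ∀ j t : ℕ, 0 < t → t < j →
      |∑ k ∈ range (j + 1), α (k + t) * β (j - k)|
        ≤ K * (j : ℝ) ^ (e - 1) * max ((j : ℝ) ^ (-d)) ((t : ℝ) ^ (-d)) := by
  obtain ⟨Kw, hKw, hw⟩ := exists_abs_sum_sub_mul_le hd.le he hC hα1 hα2 hβ he0 hen
  obtain ⟨Kα, hKα, hwα⟩ := exists_sum_range_abs_add_le hd hC hα1 hd0
  refine ⟨C * 2 ^ |e - 1| * Kα + 2 * Kw * 2 ^ |-d - 1 + e|, by positivity,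
    fun j t ht htj => ?_⟩
  set n := j - j / 2 with hn_def
  set M := max ((j : ℝ) ^ (-d)) ((t : ℝ) ^ (-d))
  have hn : 0 < n := by omega
  have hn' : (0 : ℝ) < n := Nat.cast_pos.mpr hn
  have hj' : (0 : ℝ) < j := Nat.cast_pos.mpr (ht.trans htj)
  have hcmp (p : ℝ) : (n : ℝ) ^ p ≤ 2 ^ |p| * (j : ℝ) ^ p := by
    refine rpow_le_two_rpow_abs_mul_rpow hn' hj' ?_ ?_ p <;>
    · norm_cast; omega
  rw [sum_range_succ_sub_eq_add (fun k r => α (k + t) * β r)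
    (show j / 2 + 1 ≤ j + 1 by omega), show j + 1 - (j / 2 + 1) = n by omega]
  have hlow : |∑ k ∈ range (j / 2 + 1), α (k + t) * β (j - k)|
      ≤ C * 2 ^ |e - 1| * Kα * ((j : ℝ) ^ (e - 1) * M) := by
    simp_rw [mul_comm (α _)]
    calc _ ≤ C * (n : ℝ) ^ (e - 1) * ∑ k ∈ range (j / 2 + 1), |α (k + t)| := by
          refine abs_sum_mul_le_mul_sum_abs fun k hk => (hβ _).trans ?_
          rw [mem_range] at hk
          refine mul_le_mul_of_nonneg_left (rpow_le_rpow_of_nonpos hn' ?_ ?_) hC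
          · rw [← Nat.cast_add_one, Nat.cast_le]; omega
          · linarith [abs_lt.mp he]
      _ ≤ C * (2 ^ |e - 1| * (j : ℝ) ^ (e - 1)) * (Kα * M) := by
          gcongr
          · exact hcmp _
          · exact hwα t _ j ht (by omega)
      _ = _ := by ring
  have hhigh : |∑ r ∈ range n, α (j - r + t) * β r|
      ≤ 2 * Kw * 2 ^ |-d - 1 + e| * ((j : ℝ) ^ (e - 1) * M) := by
    have hidx : ∑ r ∈ range n, α (j - r + t) * β r = ∑ r ∈ range n, α (j + t - r) * β r :=
      sum_congr rfl fun r hr => by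
        rw [mem_range] at hr
        rw [show j - r + t = j + t - r by omega]
    have hsum : (n : ℝ) ^ (-d - 1) + n * (n : ℝ) ^ (-d - 2) = 2 * (n : ℝ) ^ (-d - 1) := by
      rw [show -d - 1 = -d - 2 + 1 by ring, rpow_add_one hn'.ne']; ring
    rw [hidx]
    calc _ ≤ Kw * ((n : ℝ) ^ (-d - 1) + n * (n : ℝ) ^ (-d - 2)) * (n : ℝ) ^ e :=
          hw (j + t) n n hn hn (by omega)
      _ = 2 * Kw * (n : ℝ) ^ (-d - 1 + e) := by rw [hsum, rpow_add hn']; ring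
      _ ≤ 2 * Kw * (2 ^ |-d - 1 + e| * (j : ℝ) ^ (-d - 1 + e)) := by gcongr; exact hcmp _
      _ = 2 * Kw * 2 ^ |-d - 1 + e| * ((j : ℝ) ^ (e - 1) * (j : ℝ) ^ (-d)) := by
          rw [← rpow_add hj']; ring_nf
      _ ≤ _ := by gcongr; exact le_max_left _ _
  calc _ ≤ _ := abs_add_le _ _
    _ ≤ _ := add_le_add hlow hhigh
    _ = _ := by ring

end

theorem stmt12_general (d e : ℝ) (hd : |d| < 1) (he : |e| < 1) (α β : ℕ → ℝ) (C : ℝ)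
    (hα1 : ∀ j : ℕ, |α j| ≤ C * ((j : ℝ) + 1) ^ (-d - 1))
    (hα2 : ∀ j : ℕ, |α j - α (j + 1)| ≤ C * ((j : ℝ) + 1) ^ (-d - 2))
    (hβ1 : ∀ j : ℕ, |β j| ≤ C * ((j : ℝ) + 1) ^ (e - 1))
    (hd0 : d = 0 → Summable fun j : ℕ => |α j|)
    (he0 : e = 0 → Summable fun j : ℕ => |β j|)
    (hen : e < 0 → HasSum β 0) :
    ∃ C' : ℝ, 0 < C' ∧ ∀ j t : ℕ, 0 < j → 0 < t →
      (j ≤ t →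
        |∑ k ∈ Finset.range (j + 1), α (k + t) * β (j - k)|
          ≤ C' * (j : ℝ) ^ e * (t : ℝ) ^ (-d - 1)) ∧
      (t < j →
        |∑ k ∈ Finset.range (j + 1), α (k + t) * β (j - k)|
          ≤ C' * (j : ℝ) ^ (e - 1) * max ((j : ℝ) ^ (-d)) ((t : ℝ) ^ (-d))) := by
  have hC : 0 ≤ C := by simpa using (abs_nonneg _).trans (hβ1 0)
  have hd1 : -1 < d := (abs_lt.mp hd).1
  obtain ⟨K₁, hK₁, hnear⟩ := exists_abs_sum_le_of_le hd1.le he hC hα1 hα2 hβ1 he0 hen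
  obtain ⟨K₂, hK₂, hfar⟩ := exists_abs_sum_le_of_lt hd1 he hC hα1 hα2 hβ1 hd0 he0 hen
  refine ⟨K₁ + K₂ + 1, by positivity, fun j t hj ht => ⟨fun hjt => ?_, fun htj => ?_⟩⟩
  · refine (hnear j t hj hjt).trans ?_
    gcongr
    linarith
  · refine (hfar j t ht htj).trans ?_
    gcongr
    linarith

theorem stmt12 (d e : ℝ) (hd : |d| < 1) (he : |e| < 1) (α β : ℕ → ℝ) (C : ℝ)
    (hα1 : ∀ j : ℕ, |α j| ≤ C * ((j : ℝ) + 1) ^ (-d - 1))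
    (hα2 : ∀ j : ℕ, |α j - α (j + 1)| ≤ C * ((j : ℝ) + 1) ^ (-d - 2))
    (hβ1 : ∀ j : ℕ, |β j| ≤ C * ((j : ℝ) + 1) ^ (e - 1))
    (hβ2 : ∀ j : ℕ, |β j - β (j + 1)| ≤ C * ((j : ℝ) + 1) ^ (e - 2))
    (hd0 : d = 0 → Summable fun j : ℕ => |α j|)
    (he0 : e = 0 → Summable fun j : ℕ => |β j|)
    (hen : e < 0 → HasSum β 0) :
    ∃ C' : ℝ, 0 < C' ∧ ∀ j t : ℕ, 0 < j → 0 < t →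
      (j ≤ t →
        |∑ k ∈ Finset.range (j + 1), α (k + t) * β (j - k)|
          ≤ C' * (j : ℝ) ^ e * (t : ℝ) ^ (-d - 1)) ∧
      (t < j →
        |∑ k ∈ Finset.range (j + 1), α (k + t) * β (j - k)|
          ≤ C' * (j : ℝ) ^ (e - 1) * max ((j : ℝ) ^ (-d)) ((t : ℝ) ^ (-d))) :=
  stmt12_general d e hd he α β C hα1 hα2 hβ1 hd0 he0 hen
end

section
/- Let 0 < |ζ| < 1/2 and suppose the doubly-indexed array λ_{jt} (j ≥ 1, t ≥ 1) satisfies |λ_{jt}| ≤ C j^ζ t^{-ζ-1} for 1 ≤ j ≤ t and |λ_{jt}| ≤ C j^{ζ-1} max(j^{-ζ}, t^{-ζ}) for j > t. Then Σ_{j=1}^∞ λ_{jt}² ≤ C' t^{-1} for all t ≥ 1. -/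
open Finset

lemma sq_rpow (x : ℝ) (hx : 0 ≤ x) (p : ℝ) : (x ^ p) ^ 2 = x ^ (2 * p) := by
  rw [← Real.rpow_natCast (x ^ p) 2, ← Real.rpow_mul hx]
  norm_num [mul_comm]

lemma tailB (p : ℝ) (hp : p < -1) (t : ℕ) (ht : 1 ≤ t) (m : ℕ) :
    ∑ i ∈ Finset.range m, ((t : ℝ) + ((i + 1 : ℕ) : ℝ)) ^ p ≤ (t : ℝ) ^ (p + 1) / (-p - 1) := by
  have ht1 : (1 : ℝ) ≤ t := by exact_mod_cast ht
  have ht0 : (0 : ℝ) < t := by linarith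
  have hm : (0 : ℝ) ≤ m := Nat.cast_nonneg m
  have hanti : AntitoneOn (fun x : ℝ => x ^ p) (Set.Icc (t : ℝ) ((t : ℝ) + m)) := by
    intro x hx y hy hxy
    exact Real.rpow_le_rpow_of_nonpos (by linarith [hx.1]) hxy (by linarith)
  have hsum := hanti.sum_le_integral
  have hint : ∫ x in (t : ℝ)..((t : ℝ) + m), x ^ p
      = (((t : ℝ) + m) ^ (p + 1) - (t : ℝ) ^ (p + 1)) / (p + 1) := by
    apply integral_rpow
    right
    refine ⟨by intro h; rw [h] at hp; linarith, ?_⟩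
    rw [Set.uIcc_of_le (by linarith)]
    intro h
    have := h.1
    linarith
  rw [hint] at hsum
  refine hsum.trans ?_
  have hb : (0 : ℝ) ≤ ((t : ℝ) + m) ^ (p + 1) := Real.rpow_nonneg (by positivity) _
  have hneg : (0 : ℝ) < -p - 1 := by linarith
  have heq : (((t : ℝ) + m) ^ (p + 1) - (t : ℝ) ^ (p + 1)) / (p + 1)
      = ((t : ℝ) ^ (p + 1) - ((t : ℝ) + m) ^ (p + 1)) / (-p - 1) := by
    rw [div_eq_div_iff (by linarith) (by linarith)]; ring
  rw [heq]
  gcongr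
  linarith

lemma headA (s : ℝ) (hs1 : -1 < s) (hs2 : s ≤ 1) (t : ℕ) (ht : 1 ≤ t) :
    ∑ i ∈ Finset.range t, ((i : ℝ) + 1) ^ s ≤ (1 + 1 / (s + 1)) * (t : ℝ) ^ (s + 1) := by
  have ht1 : (1 : ℝ) ≤ t := by exact_mod_cast ht
  have ht0 : (0 : ℝ) < t := by linarith
  have hs1' : (0 : ℝ) < s + 1 := by linarith
  have htp : (1 : ℝ) ≤ (t : ℝ) ^ (s + 1) := Real.one_le_rpow ht1 (by linarith)
  rcases le_or_gt 0 s with hs | hs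
  · -- monotone case: each term ≤ t ^ s
    have : ∑ i ∈ Finset.range t, ((i : ℝ) + 1) ^ s ≤ ∑ _i ∈ Finset.range t, (t : ℝ) ^ s := by
      apply Finset.sum_le_sum
      intro i hi
      apply Real.rpow_le_rpow (by positivity) ?_ hs
      have : i + 1 ≤ t := Finset.mem_range.mp hi
      exact_mod_cast this
    refine this.trans ?_
    rw [Finset.sum_const, card_range, nsmul_eq_mul]
    have : (t : ℝ) * (t : ℝ) ^ s = (t : ℝ) ^ (s + 1) := by
      rw [Real.rpow_add ht0, Real.rpow_one]; ring
    rw [this]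
    nlinarith [Real.rpow_nonneg (le_of_lt ht0) (s + 1), one_div_pos.mpr hs1']
  · -- antitone case: integral comparison
    obtain ⟨u, rfl⟩ : ∃ u, t = u + 1 := ⟨t - 1, by omega⟩
    rw [Finset.sum_range_succ']
    have hanti : AntitoneOn (fun x : ℝ => x ^ s) (Set.Icc (1 : ℝ) ((1 : ℝ) + u)) := by
      intro x hx y hy hxy
      exact Real.rpow_le_rpow_of_nonpos (by linarith [hx.1]) hxy (by linarith)
    have hsum := hanti.sum_le_integral
    have hint : ∫ x in (1 : ℝ)..((1 : ℝ) + u), x ^ s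
        = (((1 : ℝ) + u) ^ (s + 1) - (1 : ℝ) ^ (s + 1)) / (s + 1) := by
      apply integral_rpow
      exact Or.inl hs1
    rw [hint, Real.one_rpow] at hsum
    have hcast : ((1 : ℝ) + u) = ((u + 1 : ℕ) : ℝ) := by push_cast; ring
    rw [hcast] at hsum
    have hterm : ∑ i ∈ Finset.range u, ((((i + 1 : ℕ)) : ℝ) + 1) ^ s
        ≤ (((u + 1 : ℕ) : ℝ) ^ (s + 1) - 1) / (s + 1) := by
      refine le_trans (le_of_eq ?_) hsum
      apply Finset.sum_congr rfl
      intro i _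
      congr 1
      push_cast; ring
    have h0 : (((0 : ℕ) : ℝ) + 1) ^ s = 1 := by norm_num
    rw [h0]
    have hd : (((u + 1 : ℕ) : ℝ) ^ (s + 1) - 1) / (s + 1) ≤ ((u + 1 : ℕ) : ℝ) ^ (s + 1) / (s + 1) := by
      gcongr
      linarith
    have := hterm.trans hd
    rw [div_eq_mul_one_div] at this
    nlinarith [htp]

theorem stmt13 (ζ : ℝ) (hζ1 : 0 < |ζ|) (hζ2 : |ζ| < 1 / 2)
    (lam : ℕ → ℕ → ℝ) (C : ℝ)
    (h1 : ∀ j t : ℕ, 1 ≤ j → j ≤ t →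
      |lam j t| ≤ C * (j : ℝ) ^ ζ * (t : ℝ) ^ (-ζ - 1))
    (h2 : ∀ j t : ℕ, 1 ≤ t → t < j →
      |lam j t| ≤ C * (j : ℝ) ^ (ζ - 1) * max ((j : ℝ) ^ (-ζ)) ((t : ℝ) ^ (-ζ))) :
    ∃ C' : ℝ, 0 < C' ∧ ∀ t : ℕ, 1 ≤ t →
      ∑' j : ℕ, lam (j + 1) t ^ 2 ≤ C' / t := by
  obtain ⟨hzl, hzr⟩ := abs_lt.mp hζ2
  have h2z1 : (0:ℝ) < 2 * ζ + 1 := by linarith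
  have h2z2 : (0:ℝ) < 1 - 2 * ζ := by linarith
  have hC : 0 ≤ C := by
    have h := h1 1 1 le_rfl le_rfl
    simp [Real.one_rpow] at h
    exact (abs_nonneg _).trans h
  set K : ℝ := (1 + 1 / (2 * ζ + 1)) + 1 + 1 / (1 - 2 * ζ) with hK
  have hKpos : 0 < K := by
    have := one_div_pos.mpr h2z1
    have := one_div_pos.mpr h2z2
    rw [hK]; linarith
  refine ⟨C ^ 2 * K + 1, by positivity, ?_⟩
  intro t ht
  have ht1 : (1:ℝ) ≤ t := by exact_mod_cast ht
  have ht0 : (0:ℝ) < t := by linarith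
  have key : ∀ n, ∑ i ∈ Finset.range n, lam (i + 1) t ^ 2 ≤ (C ^ 2 * K + 1) / t := by
    intro n
    rw [← Finset.sum_filter_add_sum_filter_not (Finset.range n) (fun i => i + 1 ≤ t)]
    -- head part
    have head : ∑ i ∈ (Finset.range n).filter (fun i => i + 1 ≤ t), lam (i + 1) t ^ 2
        ≤ C ^ 2 * (1 + 1 / (2 * ζ + 1)) / t := by
      have step1 : ∑ i ∈ (Finset.range n).filter (fun i => i + 1 ≤ t), lam (i + 1) t ^ 2
          ≤ ∑ i ∈ (Finset.range n).filter (fun i => i + 1 ≤ t),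
              C ^ 2 * (t:ℝ) ^ (-2 * ζ - 2) * ((i:ℝ) + 1) ^ (2 * ζ) := by
        apply Finset.sum_le_sum
        intro i hi
        have hit : i + 1 ≤ t := (Finset.mem_filter.mp hi).2
        have hb := h1 (i + 1) t (Nat.le_add_left 1 i) hit
        have hsq : lam (i + 1) t ^ 2 ≤ (C * ((i + 1 : ℕ):ℝ) ^ ζ * (t:ℝ) ^ (-ζ - 1)) ^ 2 := by
          rw [← sq_abs]
          exact pow_le_pow_left₀ (abs_nonneg _) hb 2
        refine hsq.trans (le_of_eq ?_)
        rw [mul_pow, mul_pow, sq_rpow _ (by positivity) ζ, sq_rpow _ (by positivity) (-ζ - 1)]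
        have e1 : 2 * (-ζ - 1) = -2 * ζ - 2 := by ring
        have e2 : ((i + 1 : ℕ):ℝ) = (i:ℝ) + 1 := by push_cast; ring
        rw [e1, e2]; ring
      refine step1.trans ?_
      have step2 : ∑ i ∈ (Finset.range n).filter (fun i => i + 1 ≤ t),
            C ^ 2 * (t:ℝ) ^ (-2 * ζ - 2) * ((i:ℝ) + 1) ^ (2 * ζ)
          ≤ ∑ i ∈ Finset.range t, C ^ 2 * (t:ℝ) ^ (-2 * ζ - 2) * ((i:ℝ) + 1) ^ (2 * ζ) := by
        apply Finset.sum_le_sum_of_subset_of_nonneg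
        · intro i hi
          simp only [Finset.mem_filter, Finset.mem_range] at hi ⊢
          omega
        · intro i _ _
          positivity
      refine step2.trans ?_
      rw [← Finset.mul_sum]
      have step3 := headA (2 * ζ) (by linarith) (by linarith) t ht
      calc C ^ 2 * (t:ℝ) ^ (-2 * ζ - 2) * ∑ i ∈ Finset.range t, ((i:ℝ) + 1) ^ (2 * ζ)
          ≤ C ^ 2 * (t:ℝ) ^ (-2 * ζ - 2) * ((1 + 1 / (2 * ζ + 1)) * (t:ℝ) ^ (2 * ζ + 1)) := by
            apply mul_le_mul_of_nonneg_left step3 (by positivity)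
        _ = C ^ 2 * (1 + 1 / (2 * ζ + 1)) * ((t:ℝ) ^ (-2 * ζ - 2) * (t:ℝ) ^ (2 * ζ + 1)) := by ring
        _ = C ^ 2 * (1 + 1 / (2 * ζ + 1)) / t := by
            rw [← Real.rpow_add ht0]
            rw [show -2 * ζ - 2 + (2 * ζ + 1) = (-1 : ℝ) from by ring, Real.rpow_neg_one]
            ring
    -- tail part
    have hfilter : (Finset.range n).filter (fun i => ¬ i + 1 ≤ t) = Finset.Ico t n := by
      ext i
      simp only [Finset.mem_filter, Finset.mem_range, Finset.mem_Ico]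
      omega
    have tail : ∑ i ∈ (Finset.range n).filter (fun i => ¬ i + 1 ≤ t), lam (i + 1) t ^ 2
        ≤ C ^ 2 * (1 + 1 / (1 - 2 * ζ)) / t := by
      rw [hfilter]
      have step1 : ∑ i ∈ Finset.Ico t n, lam (i + 1) t ^ 2
          ≤ ∑ i ∈ Finset.Ico t n,
              (C ^ 2 * ((i:ℝ) + 1) ^ (-2 : ℝ) + C ^ 2 * (t:ℝ) ^ (-2 * ζ) * ((i:ℝ) + 1) ^ (2 * ζ - 2)) := by
        apply Finset.sum_le_sum
        intro i hi
        have hti : t ≤ i := (Finset.mem_Ico.mp hi).1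
        have hb := h2 (i + 1) t ht (by omega)
        have ha0 : (0:ℝ) < ((i + 1 : ℕ):ℝ) := by positivity
        have hsq : lam (i + 1) t ^ 2
            ≤ (C * ((i + 1 : ℕ):ℝ) ^ (ζ - 1) * max (((i + 1 : ℕ):ℝ) ^ (-ζ)) ((t:ℝ) ^ (-ζ))) ^ 2 := by
          rw [← sq_abs]
          exact pow_le_pow_left₀ (abs_nonneg _) hb 2
        refine hsq.trans ?_
        rw [mul_pow, mul_pow, sq_rpow _ ha0.le (ζ - 1)]
        have hmax : (max (((i + 1 : ℕ):ℝ) ^ (-ζ)) ((t:ℝ) ^ (-ζ))) ^ 2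
            ≤ ((i + 1 : ℕ):ℝ) ^ (-2 * ζ) + (t:ℝ) ^ (-2 * ζ) := by
          rcases max_choice (((i + 1 : ℕ):ℝ) ^ (-ζ)) ((t:ℝ) ^ (-ζ)) with h | h <;> rw [h]
          · rw [sq_rpow _ ha0.le (-ζ)]
            have : (2 : ℝ) * -ζ = -2 * ζ := by ring
            rw [this]
            have := Real.rpow_nonneg ht0.le (-2 * ζ)
            linarith
          · rw [sq_rpow _ ht0.le (-ζ)]
            have : (2 : ℝ) * -ζ = -2 * ζ := by ring
            rw [this]
            have := Real.rpow_nonneg ha0.le (-2 * ζ)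
            linarith
        have e1 : 2 * (ζ - 1) = 2 * ζ - 2 := by ring
        rw [e1]
        have expand : C ^ 2 * ((i + 1 : ℕ):ℝ) ^ (2 * ζ - 2) *
              (((i + 1 : ℕ):ℝ) ^ (-2 * ζ) + (t:ℝ) ^ (-2 * ζ))
            = C ^ 2 * ((i:ℝ) + 1) ^ (-2 : ℝ) + C ^ 2 * (t:ℝ) ^ (-2 * ζ) * ((i:ℝ) + 1) ^ (2 * ζ - 2) := by
          have e2 : ((i + 1 : ℕ):ℝ) = (i:ℝ) + 1 := by push_cast; ring
          rw [mul_add]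
          rw [e2] at *
          have : ((i:ℝ) + 1) ^ (2 * ζ - 2) * ((i:ℝ) + 1) ^ (-2 * ζ) = ((i:ℝ) + 1) ^ (-2 : ℝ) := by
            rw [← Real.rpow_add (by positivity)]
            rw [show 2 * ζ - 2 + -2 * ζ = (-2 : ℝ) from by ring]
          rw [mul_assoc, this]
          ring
        calc C ^ 2 * ((i + 1 : ℕ):ℝ) ^ (2 * ζ - 2) *
              (max (((i + 1 : ℕ):ℝ) ^ (-ζ)) ((t:ℝ) ^ (-ζ))) ^ 2
            ≤ C ^ 2 * ((i + 1 : ℕ):ℝ) ^ (2 * ζ - 2) *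
              (((i + 1 : ℕ):ℝ) ^ (-2 * ζ) + (t:ℝ) ^ (-2 * ζ)) := by
              apply mul_le_mul_of_nonneg_left hmax (by positivity)
          _ = _ := expand
      refine step1.trans ?_
      rw [Finset.sum_add_distrib, ← Finset.mul_sum, ← Finset.mul_sum]
      -- first tail sum: p = -2
      have t1 : ∑ i ∈ Finset.Ico t n, ((i:ℝ) + 1) ^ (-2 : ℝ) ≤ 1 / t := by
        rw [Finset.sum_Ico_eq_sum_range]
        have := tailB (-2) (by norm_num) t ht (n - t)
        refine le_trans (le_of_eq ?_) (this.trans (le_of_eq ?_))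
        · apply Finset.sum_congr rfl
          intro i _
          congr 1
          push_cast; ring
        · rw [show (-2 : ℝ) + 1 = -1 from by ring, Real.rpow_neg_one]
          norm_num
      -- second tail sum: p = 2ζ - 2
      have t2 : ∑ i ∈ Finset.Ico t n, ((i:ℝ) + 1) ^ (2 * ζ - 2)
          ≤ (t:ℝ) ^ (2 * ζ - 1) / (1 - 2 * ζ) := by
        rw [Finset.sum_Ico_eq_sum_range]
        have := tailB (2 * ζ - 2) (by linarith) t ht (n - t)
        refine le_trans (le_of_eq ?_) (this.trans (le_of_eq ?_))
        · apply Finset.sum_congr rfl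
          intro i _
          congr 1
          push_cast; ring
        · rw [show 2 * ζ - 2 + 1 = 2 * ζ - 1 from by ring,
            show -(2 * ζ - 2) - 1 = 1 - 2 * ζ from by ring]
      have c1 : C ^ 2 * ∑ i ∈ Finset.Ico t n, ((i:ℝ) + 1) ^ (-2 : ℝ) ≤ C ^ 2 * (1 / t) :=
        mul_le_mul_of_nonneg_left t1 (by positivity)
      have c2 : C ^ 2 * (t:ℝ) ^ (-2 * ζ) * ∑ i ∈ Finset.Ico t n, ((i:ℝ) + 1) ^ (2 * ζ - 2)
          ≤ C ^ 2 * (1 / (1 - 2 * ζ)) / t := by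
        calc C ^ 2 * (t:ℝ) ^ (-2 * ζ) * ∑ i ∈ Finset.Ico t n, ((i:ℝ) + 1) ^ (2 * ζ - 2)
            ≤ C ^ 2 * (t:ℝ) ^ (-2 * ζ) * ((t:ℝ) ^ (2 * ζ - 1) / (1 - 2 * ζ)) :=
              mul_le_mul_of_nonneg_left t2 (by positivity)
          _ = C ^ 2 * (1 / (1 - 2 * ζ)) * ((t:ℝ) ^ (-2 * ζ) * (t:ℝ) ^ (2 * ζ - 1)) := by ring
          _ = C ^ 2 * (1 / (1 - 2 * ζ)) / t := by
              rw [← Real.rpow_add ht0]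
              rw [show -2 * ζ + (2 * ζ - 1) = (-1 : ℝ) from by ring, Real.rpow_neg_one]
              ring
      calc C ^ 2 * ∑ i ∈ Finset.Ico t n, ((i:ℝ) + 1) ^ (-2 : ℝ)
            + C ^ 2 * (t:ℝ) ^ (-2 * ζ) * ∑ i ∈ Finset.Ico t n, ((i:ℝ) + 1) ^ (2 * ζ - 2)
          ≤ C ^ 2 * (1 / t) + C ^ 2 * (1 / (1 - 2 * ζ)) / t := add_le_add c1 c2
        _ = C ^ 2 * (1 + 1 / (1 - 2 * ζ)) / t := by field_simp
    calc _ ≤ C ^ 2 * (1 + 1 / (2 * ζ + 1)) / t + C ^ 2 * (1 + 1 / (1 - 2 * ζ)) / t :=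
          add_le_add head tail
      _ = C ^ 2 * K / t := by rw [hK]; field_simp; ring
      _ ≤ (C ^ 2 * K + 1) / t := by
          gcongr
          linarith
  exact Real.tsum_le_of_sum_range_le (fun n => sq_nonneg _) key
end
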